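/- arXiv:2505.02685 — 13 statements merged into one kernel-verified Lean document; each statement's English description precedes it below -/
import Mathlib

section
/- For every n ≥ 1 and every function f : {0,1}^n → ℝ, dist₂^mono(f)² ≤ 𝔈⁻(f). -/
open Finset

/-- Flip the `i`-th bit of `x`. -/
def bflip {n : ℕ} (x : Fin n → Bool) (i : Fin n) : Fin n → Bool := Function.update x i (!x i)

/-- Set the `i`-th bit of `x` to `b`. -/
def bset {n : ℕ} (x : Fin n → Bool) (i : Fin n) (b : Bool) : Fin n → Bool := Function.update x i b

/-- Density of `A` under the uniform measure on the hypercube. -/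
noncomputable def mu {n : ℕ} (A : Finset (Fin n → Bool)) : ℝ := (A.card : ℝ) / 2 ^ n

/-- Expectation of `f` under the uniform measure on `A`. -/
noncomputable def expA {n : ℕ} (A : Finset (Fin n → Bool)) (f : (Fin n → Bool) → ℝ) : ℝ :=
  (∑ x ∈ A, f x) / (A.card : ℝ)

/-- Variance of `f` under the uniform measure on `A`. -/
noncomputable def varA {n : ℕ} (A : Finset (Fin n → Bool)) (f : (Fin n → Bool) → ℝ) : ℝ :=
  expA A (fun x => (f x - expA A f) ^ 2)

/-- Covariance of `f` and `g` under the uniform measure on `A`. -/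
noncomputable def covA {n : ℕ} (A : Finset (Fin n → Bool)) (f g : (Fin n → Bool) → ℝ) : ℝ :=
  expA A (fun x => (f x - expA A f) * (g x - expA A g))

/-- Dirichlet form of `f` on the subgraph of the hypercube induced by `A`. -/
noncomputable def dirA {n : ℕ} (A : Finset (Fin n → Bool)) (f : (Fin n → Bool) → ℝ) : ℝ :=
  (1 / 4) * expA A (fun x => ∑ i, (f x - f (bflip x i)) ^ 2 * (if bflip x i ∈ A then (1 : ℝ) else 0))

/-- Expectation of `f` under the uniform measure on the whole hypercube. -/
noncomputable def expC {n : ℕ} (f : (Fin n → Bool) → ℝ) : ℝ := (∑ x, f x) / 2 ^ n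

/-- The upward boundary (directed Dirichlet energy) `𝔈⁻(f)`. -/
noncomputable def energyMinus {n : ℕ} (f : (Fin n → Bool) → ℝ) : ℝ :=
  (1 / 4) * expC (fun x => ∑ i, (min 0 (f (bset x i true) - f (bset x i false))) ^ 2)

/-- The `L²`-distance of `f` to monotone functions on the hypercube. -/
noncomputable def dist2mono {n : ℕ} (f : (Fin n → Bool) → ℝ) : ℝ :=
  ⨅ g : {g : (Fin n → Bool) → ℝ // Monotone g}, Real.sqrt (expC fun x => (f x - g.1 x) ^ 2)

/-- `f` is monotone increasing on the poset `A`. -/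
def MonoIncrOn {n : ℕ} (A : Finset (Fin n → Bool)) (f : (Fin n → Bool) → ℝ) : Prop :=
  ∀ x ∈ A, ∀ y ∈ A, x ≤ y → f x ≤ f y

/-- `f` is non-constant on `A`. -/
def NonconstOn {n : ℕ} (A : Finset (Fin n → Bool)) (f : (Fin n → Bool) → ℝ) : Prop :=
  ∃ x ∈ A, ∃ y ∈ A, f x ≠ f y

/-- The approximate FKG ratio `δ(A)`. -/
noncomputable def fkgRatio {n : ℕ} (A : Finset (Fin n → Bool)) : ℝ :=
  min 0 (sInf {r : ℝ | ∃ f g : (Fin n → Bool) → ℝ, MonoIncrOn A f ∧ MonoIncrOn A g ∧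
    NonconstOn A f ∧ NonconstOn A g ∧ r = covA A f g / Real.sqrt (varA A f * varA A g)})

/-- The extension operator `T`. -/
noncomputable def extT {n : ℕ} (A : Finset (Fin n → Bool)) (hA : A.Nonempty)
    (f : (Fin n → Bool) → ℝ) : (Fin n → Bool) → ℝ :=
  fun x => if x ∈ A then f x else A.inf' hA f

/-- The coordinate component `ℒ^{(i)}` of the directed Laplacian. -/
noncomputable def lapI {n : ℕ} (f : (Fin n → Bool) → ℝ) (i : Fin n) (x : Fin n → Bool) : ℝ :=
  (1 / 2) * (f (bflip x i) - f x) * (if f (bset x i true) < f (bset x i false) then (1 : ℝ) else 0)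

/-- The directed Laplacian `ℒ⁻`. -/
noncomputable def lapMinus {n : ℕ} (f : (Fin n → Bool) → ℝ) (x : Fin n → Bool) : ℝ :=
  ∑ i, lapI f i x

-- averaging operator
noncomputable def Aop {n : ℕ} (i : Fin n) (h : (Fin n → Bool) → ℝ) : (Fin n → Bool) → ℝ :=
  fun x => if h (bset x i true) < h (bset x i false)
    then (h (bset x i true) + h (bset x i false)) / 2 else h x

def MonoIn {n : ℕ} (j : Fin n) (h : (Fin n → Bool) → ℝ) : Prop :=
  ∀ x, h (bset x j false) ≤ h (bset x j true)

lemma bset_bset {n : ℕ} (x : Fin n → Bool) (i : Fin n) (b c : Bool) :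
    bset (bset x i b) i c = bset x i c := by
  simp [bset, Function.update_idem]

lemma bset_self {n : ℕ} (x : Fin n → Bool) (i : Fin n) :
    bset x i (x i) = x := by
  simp [bset]

lemma bflip_eq {n : ℕ} (x : Fin n → Bool) (i : Fin n) : bflip x i = bset x i (!x i) := rfl

lemma bset_bflip {n : ℕ} (x : Fin n → Bool) (i : Fin n) (c : Bool) :
    bset (bflip x i) i c = bset x i c := by
  rw [bflip_eq, bset_bset]

lemma bflip_bflip {n : ℕ} (x : Fin n → Bool) (i : Fin n) : bflip (bflip x i) i = x := by
  simp [bflip, bset, Function.update_idem]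

-- Aop creates monotonicity in coordinate i
lemma monoIn_Aop_self {n : ℕ} (i : Fin n) (h : (Fin n → Bool) → ℝ) : MonoIn i (Aop i h) := by
  intro x
  simp only [Aop, bset_bset]
  split_ifs with hv
  · exact le_refl _
  · exact not_lt.mp hv

-- Aop i preserves monotonicity in coordinate j
lemma monoIn_Aop {n : ℕ} (i j : Fin n) (h : (Fin n → Bool) → ℝ) (H : MonoIn j h) :
    MonoIn j (Aop i h) := by
  by_cases hij : i = j
  · subst hij; exact monoIn_Aop_self i h
  intro x
  have comm : ∀ (b c : Bool), bset (bset x j b) i c = bset (bset x i c) j b := by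
    intro b c; simp [bset, Function.update_comm (Ne.symm hij)]
  have ha : h (bset (bset x j false) i false) ≤ h (bset (bset x j true) i false) := by
    rw [comm, comm]; exact H (bset x i false)
  have hb : h (bset (bset x j false) i true) ≤ h (bset (bset x j true) i true) := by
    rw [comm, comm]; exact H (bset x i true)
  have hz0 : (bset x j false) = bset (bset x j false) i (x i) := by
    rw [show (x i) = (bset x j false) i from (Function.update_of_ne hij _ x).symm, bset_self]
  have hz1 : (bset x j true) = bset (bset x j true) i (x i) := by
    rw [show (x i) = (bset x j true) i from (Function.update_of_ne hij _ x).symm, bset_self]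
  simp only [Aop]
  cases hxi : x i
  · rw [hz0, hz1]
    simp only [hxi, bset_bset]
    split_ifs with h1 h2 <;> linarith
  · rw [hz0, hz1]
    simp only [hxi, bset_bset]
    split_ifs with h1 h2 <;> linarith

-- purely arithmetic edge inequality
lemma edge_ineq (a0 a1 c0 c1 : ℝ) :
    (c0 - (if a1 < a0 then (a1 + a0) / 2 else a0)) ^ 2
      + (c1 - (if a1 < a0 then (a1 + a0) / 2 else a1)) ^ 2
    ≤ (c0 - a0) ^ 2 + (c1 - a1) ^ 2 + 1 / 2 * (min 0 (c1 - c0)) ^ 2 := by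
  have hmin : (0:ℝ) ≤ 1 / 2 * (min 0 (c1 - c0)) ^ 2 := by positivity
  split_ifs with hv
  · rcases le_total (c1 - c0) 0 with hm | hm
    · rw [min_eq_right hm]
      nlinarith [sq_nonneg (c0 - c1 - (a0 - a1)), sq_nonneg (c0 - c1)]
    · rw [min_eq_left hm]
      nlinarith [sq_nonneg (c0 - c1 - (a0 - a1)), sq_nonneg (a0 - a1)]
  · linarith

-- pair both endpoints
lemma pair_eq {n : ℕ} (F : (Fin n → Bool) → ℝ) (i : Fin n) (x : Fin n → Bool) :
    F x + F (bflip x i) = F (bset x i false) + F (bset x i true) := by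
  cases hxi : x i
  · have h1 : bset x i false = x := by rw [← hxi]; exact bset_self x i
    have h2 : bflip x i = bset x i true := by simp [bflip_eq, hxi]
    rw [h1, h2]
  · have h1 : bset x i true = x := by rw [← hxi]; exact bset_self x i
    have h2 : bflip x i = bset x i false := by simp [bflip_eq, hxi]
    rw [h1, h2]; ring

-- pointwise pair inequality at the two endpoints of an i-edge
lemma pair_ineq {n : ℕ} (f h : (Fin n → Bool) → ℝ) (i : Fin n) (x : Fin n → Bool) :
    (f (bset x i false) - Aop i h (bset x i false)) ^ 2
      + (f (bset x i true) - Aop i h (bset x i true)) ^ 2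
    ≤ (f (bset x i false) - h (bset x i false)) ^ 2
      + (f (bset x i true) - h (bset x i true)) ^ 2
      + 1 / 2 * (min 0 (f (bset x i true) - f (bset x i false))) ^ 2 := by
  simp only [Aop, bset_bset]
  exact edge_ineq _ _ _ _

lemma sum_bflip {n : ℕ} (F : (Fin n → Bool) → ℝ) (i : Fin n) :
    ∑ x, F (bflip x i) = ∑ x, F x := by
  exact Fintype.sum_bijective (fun x => bflip x i)
    (Function.Involutive.bijective (fun x => bflip_bflip x i)) _ _ (fun x => rfl)

noncomputable def Ei {n : ℕ} (f : (Fin n → Bool) → ℝ) (i : Fin n) : ℝ :=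
  1 / 4 * expC (fun x => (min 0 (f (bset x i true) - f (bset x i false))) ^ 2)

-- one-step distance bound
lemma step_bound {n : ℕ} (f h : (Fin n → Bool) → ℝ) (i : Fin n) :
    expC (fun x => (f x - Aop i h x) ^ 2)
      ≤ expC (fun x => (f x - h x) ^ 2) + Ei f i := by
  have hsum : ∑ x, (f x - Aop i h x) ^ 2
      ≤ ∑ x, ((f x - h x) ^ 2
          + 1 / 4 * (min 0 (f (bset x i true) - f (bset x i false))) ^ 2) := by
    have key : ∀ x : Fin n → Bool,
        (f x - Aop i h x) ^ 2 + (f (bflip x i) - Aop i h (bflip x i)) ^ 2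
        ≤ ((f x - h x) ^ 2 + (f (bflip x i) - h (bflip x i)) ^ 2)
          + 1 / 2 * (min 0 (f (bset x i true) - f (bset x i false))) ^ 2 := by
      intro x
      have e1 := pair_eq (fun y => (f y - Aop i h y) ^ 2) i x
      have e2 := pair_eq (fun y => (f y - h y) ^ 2) i x
      rw [e1, e2]
      exact pair_ineq f h i x
    have h1 : ∑ x, ((f x - Aop i h x) ^ 2 + (f (bflip x i) - Aop i h (bflip x i)) ^ 2)
        ≤ ∑ x, (((f x - h x) ^ 2 + (f (bflip x i) - h (bflip x i)) ^ 2)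
          + 1 / 2 * (min 0 (f (bset x i true) - f (bset x i false))) ^ 2) :=
      Finset.sum_le_sum (fun x _ => key x)
    rw [Finset.sum_add_distrib, Finset.sum_add_distrib, Finset.sum_add_distrib,
        sum_bflip (fun x => (f x - Aop i h x) ^ 2) i,
        sum_bflip (fun x => (f x - h x) ^ 2) i] at h1
    have h3 : ∑ x : Fin n → Bool, 1 / 2 * (min 0 (f (bset x i true) - f (bset x i false))) ^ 2
        = 2 * ∑ x : Fin n → Bool, 1 / 4 * (min 0 (f (bset x i true) - f (bset x i false))) ^ 2 := by
      rw [← Finset.mul_sum, ← Finset.mul_sum]; ring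
    rw [Finset.sum_add_distrib]
    linarith
  unfold expC Ei expC
  have h2n : (0:ℝ) < 2 ^ n := by positivity
  have heq : (∑ x, (f x - h x) ^ 2) / 2 ^ n
      + 1 / 4 * ((∑ x, (min 0 (f (bset x i true) - f (bset x i false))) ^ 2) / 2 ^ n)
      = (∑ x, ((f x - h x) ^ 2
          + 1 / 4 * (min 0 (f (bset x i true) - f (bset x i false))) ^ 2)) / 2 ^ n := by
    rw [Finset.sum_add_distrib, ← Finset.mul_sum]
    ring
  rw [heq]
  exact div_le_div_of_nonneg_right hsum h2n.le

noncomputable def chainA {n : ℕ} : List (Fin n) → ((Fin n → Bool) → ℝ) → ((Fin n → Bool) → ℝ)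
  | [], h => h
  | i :: l, h => chainA l (Aop i h)

lemma chainA_preserve {n : ℕ} (l : List (Fin n)) (j : Fin n) :
    ∀ h, MonoIn j h → MonoIn j (chainA l h) := by
  induction l with
  | nil => intro h H; exact H
  | cons i l IH => intro h H; exact IH (Aop i h) (monoIn_Aop i j h H)

lemma chainA_create {n : ℕ} (l : List (Fin n)) (j : Fin n) (hj : j ∈ l) :
    ∀ h, MonoIn j (chainA l h) := by
  induction l with
  | nil => cases hj
  | cons i l IH =>
    intro h
    rcases List.mem_cons.mp hj with h1 | h1
    · subst h1
      exact chainA_preserve l j (Aop j h) (monoIn_Aop_self j h)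
    · exact IH h1 (Aop i h)

lemma monotone_of_monoIn {n : ℕ} (g : (Fin n → Bool) → ℝ) (H : ∀ j, MonoIn j g) :
    Monotone g := by
  have aux : ∀ s : Finset (Fin n), ∀ x y : Fin n → Bool,
      x ≤ y → (∀ i, i ∉ s → x i = y i) → g x ≤ g y := by
    intro s
    induction s using Finset.induction_on with
    | empty =>
      intro x y _ hagree
      have : x = y := funext fun i => hagree i (Finset.notMem_empty i)
      rw [this]
    | @insert a s ha IH =>
      intro x y hxy hagree
      by_cases hcase : x a = y a
      · refine le_trans (le_of_eq rfl) (IH x y hxy ?_)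
        intro i hi
        by_cases hia : i = a
        · subst hia; exact hcase
        · exact hagree i (by simp [hia, hi])
      · have hfa : x a = false ∧ y a = true := by
          have := hxy a
          revert this hcase
          cases x a <;> cases y a <;> simp
        have h1 : g x ≤ g (bset x a true) := by
          have hx : x = bset x a false := by rw [← hfa.1]; exact (bset_self x a).symm
          calc g x = g (bset x a false) := by rw [← hx]
          _ ≤ g (bset x a true) := H a x
        have h2 : g (bset x a true) ≤ g y := by
          apply IH
          · intro i
            by_cases hia : i = a
            · subst hia; simp [bset, hfa.2]
            · simp only [bset, Function.update_of_ne hia]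
              exact hxy i
          · intro i hi
            by_cases hia : i = a
            · subst hia; simp [bset, hfa.2]
            · simp only [bset, Function.update_of_ne hia]
              exact hagree i (by simp [hia, hi])
        exact le_trans h1 h2
  intro x y hxy
  exact aux Finset.univ x y hxy (fun i hi => absurd (Finset.mem_univ i) hi)

lemma chain_dist {n : ℕ} (f : (Fin n → Bool) → ℝ) :
    ∀ (l : List (Fin n)) (h : (Fin n → Bool) → ℝ),
      expC (fun x => (f x - chainA l h x) ^ 2)
        ≤ expC (fun x => (f x - h x) ^ 2) + (l.map (Ei f)).sum := by
  intro l
  induction l with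
  | nil => intro h; simp [chainA]
  | cons i l IH =>
    intro h
    have h1 := IH (Aop i h)
    have h2 := step_bound f h i
    have h3 : chainA (i :: l) h = chainA l (Aop i h) := rfl
    rw [h3, List.map_cons, List.sum_cons]
    linarith

lemma energyMinus_eq {n : ℕ} (f : (Fin n → Bool) → ℝ) :
    energyMinus f = ∑ i, Ei f i := by
  unfold energyMinus Ei expC
  rw [Finset.sum_comm, Finset.sum_div, Finset.mul_sum]

/-- Directed L²-Poincaré inequality on the hypercube:
`dist₂^mono(f)² ≤ 𝔈⁻(f)`. -/
theorem stmt_1 (n : ℕ) (hn : 1 ≤ n) (f : (Fin n → Bool) → ℝ) :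
    dist2mono f ^ 2 ≤ energyMinus f := by
  set g := chainA (List.finRange n) f with hg
  have hmono : Monotone g :=
    monotone_of_monoIn g (fun j => chainA_create _ j (List.mem_finRange j) f)
  have hE : expC (fun x => (f x - g x) ^ 2) ≤ energyMinus f := by
    have h1 := chain_dist f (List.finRange n) f
    have h0 : expC (fun x : Fin n → Bool => (f x - f x) ^ 2) = 0 := by simp [expC]
    have h2 : ((List.finRange n).map (Ei f)).sum = ∑ i, Ei f i :=
      (Fin.sum_univ_def (Ei f)).symm
    rw [h0, h2, zero_add] at h1
    rw [energyMinus_eq]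
    exact h1
  have hnn : 0 ≤ expC fun x => (f x - g x) ^ 2 := by
    unfold expC; positivity
  haveI : Nonempty {g : (Fin n → Bool) → ℝ // Monotone g} := ⟨⟨fun _ => 0, monotone_const⟩⟩
  have hle : dist2mono f ≤ Real.sqrt (expC fun x => (f x - g x) ^ 2) := by
    unfold dist2mono
    refine ciInf_le ⟨0, ?_⟩ (⟨g, hmono⟩ : {g : (Fin n → Bool) → ℝ // Monotone g})
    rintro y ⟨gm, rfl⟩; exact Real.sqrt_nonneg _
  have h0' : 0 ≤ dist2mono f := le_ciInf (fun g' => Real.sqrt_nonneg _)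
  calc dist2mono f ^ 2 ≤ Real.sqrt (expC fun x => (f x - g x) ^ 2) ^ 2 :=
        pow_le_pow_left₀ h0' hle 2
    _ = expC fun x => (f x - g x) ^ 2 := Real.sq_sqrt hnn
    _ ≤ energyMinus f := hE
end

section
/- Let A ⊆ {0,1}^n be a monotone set with at least 2 elements and let δ(A) be its approximate FKG ratio. Then there exists a non-constant function f : A → ℝ such that (1 + δ(A))·n·Var_A[f] ≥ 𝔈_A(f). -/
open Finset

/-!
Let `Λ` be the minimum of the Dirichlet form `D(u, u) = ∑_{x ∈ A} ∑_{i, x^⊕i ∈ A} (u x - u x^⊕i)²`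
over functions `u` with `∑_A u = 0` and `∑_A u² = 1`, attained at some `f`. Then
`𝔈_A(f) = Λ / (4|A|)` and `Var_A[f] = 1 / |A|`, so it suffices to show `δ(A) ≥ Λ / (4n) - 1`.
Every vertex has at most `n` neighbours, so `B = 4n⟨·,·⟩ - D` is positive semidefinite, and
`B(u, u) ≤ (4n - Λ)⟨u, u⟩` for centered `u`. For monotone `g, h` the cross term `D(g, h)` is
nonnegative, because along every edge `g` and `h` increase in the same direction. Cauchy–Schwarz
for `B` applied to the centered `g, h` then gives `4n·Cov(g, h) ≥ -(4n - Λ)·√(Var g · Var h)`.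
-/

namespace FKGSpectral

variable {n : ℕ}

lemma bflip_bflip (x : Fin n → Bool) (i : Fin n) : bflip (bflip x i) i = x := by
  simp [bflip]

lemma le_bflip_or_bflip_le (x : Fin n → Bool) (i : Fin n) : x ≤ bflip x i ∨ bflip x i ≤ x := by
  cases hxi : x i
  · exact Or.inl fun j => by by_cases hj : j = i <;> simp [bflip, hj, hxi]
  · exact Or.inr fun j => by by_cases hj : j = i <;> simp [bflip, hj, hxi]

variable (A : Finset (Fin n → Bool))

def innerOn (u v : (Fin n → Bool) → ℝ) : ℝ := ∑ x ∈ A, u x * v x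

def dirichletOn (u v : (Fin n → Bool) → ℝ) : ℝ :=
  ∑ i, ∑ x ∈ A with bflip x i ∈ A, (u x - u (bflip x i)) * (v x - v (bflip x i))

lemma sum_comp_bflip (i : Fin n) (F : (Fin n → Bool) → ℝ) :
    ∑ x ∈ A with bflip x i ∈ A, F (bflip x i) = ∑ x ∈ A with bflip x i ∈ A, F x :=
  Finset.sum_nbij' (bflip · i) (bflip · i) (by simp [bflip_bflip, and_comm])
    (by simp [bflip_bflip, and_comm]) (by simp [bflip_bflip]) (by simp [bflip_bflip])
    (fun _ _ => rfl)

lemma innerOn_self_nonneg (u : (Fin n → Bool) → ℝ) : 0 ≤ innerOn A u u :=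
  Finset.sum_nonneg fun x _ => mul_self_nonneg (u x)

lemma dirichletOn_self_nonneg (u : (Fin n → Bool) → ℝ) : 0 ≤ dirichletOn A u u :=
  Finset.sum_nonneg fun _ _ => Finset.sum_nonneg fun _ _ => mul_self_nonneg _

lemma dirichletOn_self_le (u : (Fin n → Bool) → ℝ) :
    dirichletOn A u u ≤ 4 * n * innerOn A u u := by
  calc dirichletOn A u u
      ≤ ∑ i, ∑ x ∈ A with bflip x i ∈ A,
          (2 * (u x * u x) + 2 * (u (bflip x i) * u (bflip x i))) := by
        unfold dirichletOn
        gcongr with i _ x _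
        nlinarith [sq_nonneg (u x + u (bflip x i))]
    _ = ∑ i, ∑ x ∈ A with bflip x i ∈ A, 4 * (u x * u x) := by
        refine Finset.sum_congr rfl fun i _ => ?_
        rw [Finset.sum_add_distrib, sum_comp_bflip A i (fun y => 2 * (u y * u y)),
          ← Finset.sum_add_distrib]
        ring_nf
    _ ≤ ∑ _i : Fin n, ∑ x ∈ A, 4 * (u x * u x) := by
        refine Finset.sum_le_sum fun i _ => ?_
        exact Finset.sum_le_sum_of_subset_of_nonneg (Finset.filter_subset _ _)
          fun x _ _ => mul_nonneg zero_le_four (mul_self_nonneg _)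
    _ = 4 * n * innerOn A u u := by
        simp only [innerOn, Finset.sum_const, Finset.card_univ, Fintype.card_fin, nsmul_eq_mul,
          Finset.mul_sum]
        exact Finset.sum_congr rfl fun x _ => by ring

lemma dirichletOn_congr {u u' v v' : (Fin n → Bool) → ℝ} (hu : ∀ x ∈ A, u x = u' x)
    (hv : ∀ x ∈ A, v x = v' x) : dirichletOn A u v = dirichletOn A u' v' := by
  refine Finset.sum_congr rfl fun i _ => Finset.sum_congr rfl fun x hx => ?_
  rw [Finset.mem_filter] at hx
  rw [hu x hx.1, hu _ hx.2, hv x hx.1, hv _ hx.2]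

lemma dirichletOn_sub_const (u v : (Fin n → Bool) → ℝ) (c d : ℝ) :
    dirichletOn A (fun x => u x - c) (fun x => v x - d) = dirichletOn A u v := by
  simp only [dirichletOn, sub_sub_sub_cancel_right]

lemma dirichletOn_div_const (u : (Fin n → Bool) → ℝ) (s : ℝ) :
    dirichletOn A (fun x => u x / s) (fun x => u x / s) = dirichletOn A u u / s ^ 2 := by
  simp only [dirichletOn, Finset.sum_div]
  exact Finset.sum_congr rfl fun i _ => Finset.sum_congr rfl fun x _ => by ring

lemma dirichletOn_nonneg_of_monoIncrOn {g h : (Fin n → Bool) → ℝ} (hg : MonoIncrOn A g)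
    (hh : MonoIncrOn A h) : 0 ≤ dirichletOn A g h := by
  refine Finset.sum_nonneg fun i _ => Finset.sum_nonneg fun x hx => ?_
  rw [Finset.mem_filter] at hx
  obtain ⟨hx, hy⟩ := hx
  rcases le_bflip_or_bflip_le x i with hle | hle
  · exact mul_nonneg_of_nonpos_of_nonpos (sub_nonpos.mpr (hg _ hx _ hy hle))
      (sub_nonpos.mpr (hh _ hx _ hy hle))
  · exact mul_nonneg (sub_nonneg.mpr (hg _ hy _ hx hle)) (sub_nonneg.mpr (hh _ hy _ hx hle))

def shiftedForm (u v : (Fin n → Bool) → ℝ) : ℝ := 4 * n * innerOn A u v - dirichletOn A u v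

lemma shiftedForm_self_nonneg (u : (Fin n → Bool) → ℝ) : 0 ≤ shiftedForm A u u :=
  sub_nonneg.mpr (dirichletOn_self_le A u)

lemma innerOn_add_smul (u v : (Fin n → Bool) → ℝ) (t : ℝ) :
    innerOn A (fun x => u x + t * v x) (fun x => u x + t * v x)
      = innerOn A v v * (t * t) + 2 * innerOn A u v * t + innerOn A u u := by
  simp only [innerOn, Finset.mul_sum, Finset.sum_mul, ← Finset.sum_add_distrib]
  exact Finset.sum_congr rfl fun x _ => by ring

lemma dirichletOn_add_smul (u v : (Fin n → Bool) → ℝ) (t : ℝ) :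
    dirichletOn A (fun x => u x + t * v x) (fun x => u x + t * v x)
      = dirichletOn A v v * (t * t) + 2 * dirichletOn A u v * t + dirichletOn A u u := by
  simp only [dirichletOn, Finset.mul_sum, Finset.sum_mul, ← Finset.sum_add_distrib]
  exact Finset.sum_congr rfl fun i _ => Finset.sum_congr rfl fun x _ => by ring

lemma shiftedForm_add_smul (u v : (Fin n → Bool) → ℝ) (t : ℝ) :
    shiftedForm A (fun x => u x + t * v x) (fun x => u x + t * v x)
      = shiftedForm A v v * (t * t) + 2 * shiftedForm A u v * t + shiftedForm A u u := by
  simp only [shiftedForm, innerOn_add_smul, dirichletOn_add_smul]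
  ring

lemma sq_shiftedForm_le (u v : (Fin n → Bool) → ℝ) :
    shiftedForm A u v ^ 2 ≤ shiftedForm A u u * shiftedForm A v v := by
  have h := discrim_le_zero fun t => (shiftedForm_add_smul A u v t).symm ▸
    shiftedForm_self_nonneg A (fun x => u x + t * v x)
  rw [discrim] at h
  nlinarith

def HasSpectralGap (Λ : ℝ) : Prop :=
  ∀ w : (Fin n → Bool) → ℝ, ∑ x ∈ A, w x = 0 → Λ * innerOn A w w ≤ dirichletOn A w w

variable {A}

lemma sub_mul_sqrt_le_innerOn {Λ : ℝ} (hgap : HasSpectralGap A Λ) (hΛ : Λ ≤ 4 * n)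
    {u v : (Fin n → Bool) → ℝ} (hu : ∑ x ∈ A, u x = 0) (hv : ∑ x ∈ A, v x = 0)
    (huv : 0 ≤ dirichletOn A u v) :
    (Λ - 4 * n) * √(innerOn A u u * innerOn A v v) ≤ 4 * n * innerOn A u v := by
  have hgap' : ∀ w, ∑ x ∈ A, w x = 0 → shiftedForm A w w ≤ (4 * n - Λ) * innerOn A w w :=
    fun w hw => by have := hgap w hw; unfold shiftedForm; linarith
  have hsq : shiftedForm A u v ^ 2 ≤ (4 * n - Λ) ^ 2 * (innerOn A u u * innerOn A v v) :=
    calc shiftedForm A u v ^ 2 ≤ shiftedForm A u u * shiftedForm A v v := sq_shiftedForm_le A u v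
      _ ≤ ((4 * n - Λ) * innerOn A u u) * ((4 * n - Λ) * innerOn A v v) :=
          mul_le_mul (hgap' u hu) (hgap' v hv) (shiftedForm_self_nonneg A v)
            (le_trans (shiftedForm_self_nonneg A u) (hgap' u hu))
      _ = (4 * n - Λ) ^ 2 * (innerOn A u u * innerOn A v v) := by ring
  have habs := Real.abs_le_sqrt hsq
  rw [Real.sqrt_mul (sq_nonneg _), Real.sqrt_sq (sub_nonneg.mpr hΛ)] at habs
  have := neg_abs_le (shiftedForm A u v)
  unfold shiftedForm at this habs
  linarith

lemma sum_sub_expA (g : (Fin n → Bool) → ℝ) : ∑ x ∈ A, (g x - expA A g) = 0 := by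
  rcases A.eq_empty_or_nonempty with rfl | hA
  · simp
  · rw [Finset.sum_sub_distrib, Finset.sum_const, nsmul_eq_mul, expA,
      mul_div_cancel₀ _ (by positivity), sub_self]

lemma varA_eq_innerOn (g : (Fin n → Bool) → ℝ) :
    varA A g = innerOn A (fun x => g x - expA A g) (fun x => g x - expA A g) / A.card := by
  simp only [varA, expA, innerOn, sq]

lemma covA_div_sqrt_eq (hA : A.Nonempty) (g h : (Fin n → Bool) → ℝ) :
    covA A g h / √(varA A g * varA A h)
      = innerOn A (fun x => g x - expA A g) (fun x => h x - expA A h) /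
          √(innerOn A (fun x => g x - expA A g) (fun x => g x - expA A g) *
            innerOn A (fun x => h x - expA A h) (fun x => h x - expA A h)) := by
  have hN : (0 : ℝ) < A.card := by exact_mod_cast hA.card_pos
  rw [varA_eq_innerOn, varA_eq_innerOn, div_mul_div_comm, Real.sqrt_div' _ (by positivity),
    Real.sqrt_mul_self hN.le]
  exact div_div_div_cancel_right₀ hN.ne' _ _

lemma sub_one_le_correlation_of_hasSpectralGap (hA : A.Nonempty) (hn : 0 < n) {Λ : ℝ}
    (hgap : HasSpectralGap A Λ) (hΛ : Λ ≤ 4 * n) {g h : (Fin n → Bool) → ℝ}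
    (hg : MonoIncrOn A g) (hh : MonoIncrOn A h) :
    Λ / (4 * n) - 1 ≤ covA A g h / √(varA A g * varA A h) := by
  have h4n : (0 : ℝ) < 4 * n := by positivity
  have hle0 : Λ / (4 * n) - 1 ≤ 0 := by rw [sub_nonpos, div_le_one h4n]; exact hΛ
  have key := sub_mul_sqrt_le_innerOn hgap hΛ (sum_sub_expA g) (sum_sub_expA h)
    (by rw [dirichletOn_sub_const]; exact dirichletOn_nonneg_of_monoIncrOn A hg hh)
  rw [covA_div_sqrt_eq hA]
  set R := √(innerOn A (fun x => g x - expA A g) (fun x => g x - expA A g) *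
    innerOn A (fun x => h x - expA A h) (fun x => h x - expA A h))
  have hR0 : 0 ≤ R := Real.sqrt_nonneg _
  clear_value R
  rcases hR0.eq_or_lt with hR | hR
  · -- `x / √0 = 0` in Lean, and `Λ / (4n) - 1 ≤ 0`
    rw [← hR, div_zero]; exact hle0
  · have hlhs : (Λ / (4 * n) - 1) * R = (Λ - 4 * n) * R / (4 * n) := by field_simp
    rw [le_div_iff₀ hR, hlhs, div_le_iff₀ h4n]
    linarith

lemma sub_one_le_fkgRatio (hA : A.Nonempty) (hn : 0 < n) {Λ : ℝ} (hgap : HasSpectralGap A Λ)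
    (hΛ : Λ ≤ 4 * n) : Λ / (4 * n) - 1 ≤ fkgRatio A := by
  have hle0 : Λ / (4 * n) - 1 ≤ 0 := by
    rw [sub_nonpos, div_le_one (by positivity)]; exact hΛ
  refine le_min hle0 (Real.le_sInf ?_ hle0)
  rintro r ⟨g, h, hg, hh, -, -, rfl⟩
  exact sub_one_le_correlation_of_hasSpectralGap hA hn hgap hΛ hg hh

variable (A) in
def unitCentered : Set ((Fin n → Bool) → ℝ) :=
  {u | (∀ x ∉ A, u x = 0) ∧ ∑ x ∈ A, u x = 0 ∧ innerOn A u u = 1}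

variable (A) in
lemma isCompact_unitCentered : IsCompact (unitCentered A) := by
  refine IsCompact.of_isClosed_subset (isCompact_closedBall 0 1) ?_ ?_
  · have hsupp : IsClosed {u : (Fin n → Bool) → ℝ | ∀ x ∉ A, u x = 0} := by
      simp only [Set.ofPred_forall]
      exact isClosed_iInter fun x => isClosed_iInter fun _ =>
        isClosed_eq (continuous_apply x) continuous_const
    exact hsupp.inter ((isClosed_eq (continuous_finsetSum A fun x _ => continuous_apply x)
      continuous_const).inter (isClosed_eq (continuous_finsetSum A fun x _ =>
        (continuous_apply x).mul (continuous_apply x)) continuous_const))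
  · rintro u ⟨hsupp, -, hnorm⟩
    rw [Metric.mem_closedBall, dist_zero_right, pi_norm_le_iff_of_nonneg zero_le_one]
    intro x
    by_cases hx : x ∈ A
    · have hle : u x * u x ≤ 1 :=
        hnorm ▸ Finset.single_le_sum (fun y _ => mul_self_nonneg (u y)) hx
      rwa [Real.norm_eq_abs, abs_le_one_iff_mul_self_le_one]
    · simp [hsupp x hx]

variable (A) in
noncomputable def normalizeOn (w : (Fin n → Bool) → ℝ) : (Fin n → Bool) → ℝ :=
  fun x => if x ∈ A then w x / √(innerOn A w w) else 0

lemma normalizeOn_of_mem {w : (Fin n → Bool) → ℝ} {x : Fin n → Bool} (hx : x ∈ A) :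
    normalizeOn A w x = w x / √(innerOn A w w) :=
  if_pos hx

lemma normalizeOn_mem_unitCentered {w : (Fin n → Bool) → ℝ} (hw : ∑ x ∈ A, w x = 0)
    (hpos : 0 < innerOn A w w) : normalizeOn A w ∈ unitCentered A := by
  refine ⟨fun x hx => if_neg hx, ?_, ?_⟩
  · rw [Finset.sum_congr rfl fun x hx => normalizeOn_of_mem hx, ← Finset.sum_div, hw, zero_div]
  · rw [innerOn, Finset.sum_congr rfl fun x hx => by rw [normalizeOn_of_mem hx, div_mul_div_comm],
      ← Finset.sum_div, Real.mul_self_sqrt hpos.le]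
    exact div_self hpos.ne'

lemma dirichletOn_normalizeOn (w : (Fin n → Bool) → ℝ) :
    dirichletOn A (normalizeOn A w) (normalizeOn A w) = dirichletOn A w w / innerOn A w w := by
  rw [dirichletOn_congr A (fun x hx => normalizeOn_of_mem hx) (fun x hx => normalizeOn_of_mem hx),
    dirichletOn_div_const, Real.sq_sqrt (innerOn_self_nonneg A w)]

lemma exists_isMinOn_dirichletOn (hcard : 2 ≤ A.card) :
    ∃ f ∈ unitCentered A, IsMinOn (fun u => dirichletOn A u u) (unitCentered A) f := by
  obtain ⟨a, ha, b, hb, hab⟩ := Finset.one_lt_card.mp hcard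
  set w : (Fin n → Bool) → ℝ := fun x => (if x = a then 1 else 0) - (if x = b then 1 else 0)
  have hw : ∑ x ∈ A, w x = 0 := by simp [w, Finset.sum_sub_distrib, ha, hb]
  have hpos : 0 < innerOn A w w := by
    simp [innerOn, w, mul_sub, Finset.sum_sub_distrib, ha, hb, hab, hab.symm]
  refine (isCompact_unitCentered A).exists_isMinOn ⟨_, normalizeOn_mem_unitCentered hw hpos⟩ ?_
  unfold dirichletOn
  fun_prop

lemma hasSpectralGap_of_isMinOn {f : (Fin n → Bool) → ℝ}
    (hmin : IsMinOn (fun u => dirichletOn A u u) (unitCentered A) f) :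
    HasSpectralGap A (dirichletOn A f f) := by
  intro w hw
  rcases (innerOn_self_nonneg A w).eq_or_lt with h0 | hpos
  · rw [← h0, mul_zero]
    exact dirichletOn_self_nonneg A w
  · have : dirichletOn A f f ≤ dirichletOn A (normalizeOn A w) (normalizeOn A w) :=
      hmin (normalizeOn_mem_unitCentered hw hpos)
    rwa [dirichletOn_normalizeOn, le_div_iff₀ hpos] at this

lemma dirA_eq_dirichletOn (f : (Fin n → Bool) → ℝ) :
    dirA A f = dirichletOn A f f / (4 * A.card) := by
  rw [dirA, expA, dirichletOn, Finset.sum_comm]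
  simp only [Finset.sum_filter, mul_ite, mul_one, mul_zero, sq]
  ring

lemma varA_of_mem_unitCentered {f : (Fin n → Bool) → ℝ} (hf : f ∈ unitCentered A) :
    varA A f = 1 / A.card := by
  have hexp : expA A f = 0 := by rw [expA, hf.2.1, zero_div]
  simp only [varA_eq_innerOn, hexp, sub_zero, hf.2.2]

lemma nonconstOn_of_mem_unitCentered {u : (Fin n → Bool) → ℝ} (hu : u ∈ unitCentered A) :
    NonconstOn A u := by
  obtain ⟨-, hsum, hnorm⟩ := hu
  by_contra hconst
  simp only [NonconstOn, not_exists, not_and, not_not] at hconst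
  obtain ⟨x₀, hx₀⟩ : A.Nonempty := by
    rw [Finset.nonempty_iff_ne_empty]; rintro rfl; simp [innerOn] at hnorm
  have : innerOn A u u = 0 := by
    rw [innerOn, Finset.sum_congr rfl fun x hx => by rw [hconst x hx x₀ hx₀], ← Finset.sum_mul,
      ← Finset.sum_congr rfl fun x hx => hconst x hx x₀ hx₀, hsum, zero_mul]
  simp [hnorm] at this

end FKGSpectral

open FKGSpectral in
theorem stmt_4_general (n : ℕ) (A : Finset (Fin n → Bool)) (hcard : 2 ≤ A.card) :
    ∃ f : (Fin n → Bool) → ℝ, NonconstOn A f ∧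
      (1 + fkgRatio A) * n * varA A f ≥ dirA A f := by
  have hA : A.Nonempty := Finset.card_pos.mp (by omega)
  have hn : 0 < n := Nat.pos_of_ne_zero fun hn0 => by
    subst hn0
    have := A.card_le_univ
    simp at this
    omega
  obtain ⟨f, hf, hmin⟩ := exists_isMinOn_dirichletOn hcard
  have hΛ : dirichletOn A f f ≤ 4 * n := by
    simpa [hf.2.2] using dirichletOn_self_le A f
  have hδ := sub_one_le_fkgRatio hA hn (hasSpectralGap_of_isMinOn hmin) hΛ
  refine ⟨f, nonconstOn_of_mem_unitCentered hf, ?_⟩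
  have hN : (0 : ℝ) < A.card := by exact_mod_cast hA.card_pos
  rw [ge_iff_le, dirA_eq_dirichletOn, varA_of_mem_unitCentered hf]
  calc dirichletOn A f f / (4 * A.card) = dirichletOn A f f / (4 * n) * n * (1 / A.card) := by
        field_simp
    _ ≤ (1 + fkgRatio A) * n * (1 / A.card) := by gcongr; linarith

/-- for a monotone set `A` with at least two elements, there is a
non-constant `f : A → ℝ` with `(1 + δ(A))·n·Var_A[f] ≥ 𝔈_A(f)`. -/
theorem stmt_4 (n : ℕ) (A : Finset (Fin n → Bool)) (hcard : 2 ≤ A.card)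
    (hmono : ∀ x ∈ A, ∀ y : Fin n → Bool, x ≤ y → y ∈ A) :
    ∃ f : (Fin n → Bool) → ℝ, NonconstOn A f ∧
      (1 + fkgRatio A) * n * varA A f ≥ dirA A f :=
  stmt_4_general n A hcard
end

section
/- Let (X, Y) be a pair of real-valued random variables on a probability space with E[X²] < ∞ and E[Y²] < ∞, and suppose there is a constant c ∈ [0,1) such that for all a, b ∈ ℝ, P(X ≥ a and Y ≥ b) ≥ c·P(X ≥ a)·P(Y ≥ b). Then Cov(X,Y) ≥ −√((1 − c)·Var(X)·Var(Y)). -/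
/-!
Truncating `X` and `Y` at `±n` and letting `n → ∞` by dominated convergence, we may assume
`|X|, |Y| ≤ R`. With the survival functions `F a = P(X ≥ a)`, `G b = P(Y ≥ b)` and
`H a b = P(X ≥ a, Y ≥ b)`, Hoeffding's identity reads `Cov(X,Y) = ∬ (H - F G)` over
`[-R,R]²`, and in particular `Var X = ∬ (min (F a) (F a') - F a F a')`.
The hypothesis `H ≥ c F G` and the Fréchet bound `H ≥ F + G - 1` give
`H - F G ≥ -min ((1-c) F G) ((1-F) (1-G))`. This kernel is a Gram kernel in `L²(0,1)`:
for `φ_x = 1_{(0,x)} - x` and `ψ_y = (1 - c y) φ_{(1-y)/(1-c y)}` (`centeredStep x` and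
`dampedStep c y`),
`⟪φ_x, φ_x'⟫ = min x x' - x x'`, `⟪ψ_y, ψ_y'⟫ = (1-c) (min y y' - y y')` and
`⟪φ_x, ψ_y⟫ = min ((1-c) x y) ((1-x) (1-y))`. Integrating `φ_{F a}` and `ψ_{G b}` over `a` and `b`
and applying Cauchy–Schwarz in `L²(0,1)` bounds `∬ min (...)` by `√((1-c) Var X Var Y)`.
-/

open MeasureTheory ProbabilityTheory Set Filter Topology

noncomputable def centeredStep (x u : ℝ) : ℝ := (Iio x).indicator 1 u - x

lemma integral_indicator_Iio_unitInterval {x : ℝ} (hx : x ∈ Icc (0:ℝ) 1) :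
    ∫ u in Ioo 0 1, (Iio x).indicator (1 : ℝ → ℝ) u = x := by
  rw [integral_indicator_one measurableSet_Iio, measureReal_restrict_apply measurableSet_Iio,
    Iio_inter_Ioo, min_eq_left hx.2, Real.volume_real_Ioo_of_le hx.1, sub_zero]

lemma centeredStep_mul_centeredStep (x y u : ℝ) :
    centeredStep x u * centeredStep y u = (Iio (min x y)).indicator 1 u
      - y * (Iio x).indicator 1 u - x * (Iio y).indicator 1 u + x * y := by
  simp only [centeredStep, indicator_apply, mem_Iio, lt_min_iff, Pi.one_apply]
  split_ifs <;> simp_all <;> ring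

lemma integral_centeredStep_mul {x y : ℝ} (hx : x ∈ Icc (0:ℝ) 1) (hy : y ∈ Icc (0:ℝ) 1) :
    ∫ u in Ioo 0 1, centeredStep x u * centeredStep y u = min x y - x * y := by
  have hI (s : ℝ) : Integrable ((Iio s).indicator (1 : ℝ → ℝ)) (volume.restrict (Ioo (0:ℝ) 1)) :=
    (integrable_const 1).indicator measurableSet_Iio
  simp_rw [centeredStep_mul_centeredStep]
  rw [integral_add, integral_sub, integral_sub, integral_const_mul, integral_const_mul,
    integral_indicator_Iio_unitInterval hx, integral_indicator_Iio_unitInterval hy,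
    integral_indicator_Iio_unitInterval ⟨le_min hx.1 hy.1, min_le_of_left_le hx.2⟩,
    integral_const]
  · simp
    ring
  all_goals first
    | exact hI _
    | exact (hI _).const_mul _
    | exact integrable_const _
    | exact (hI _).sub ((hI _).const_mul _)
    | exact ((hI _).sub ((hI _).const_mul _)).sub ((hI _).const_mul _)

lemma abs_centeredStep_le {x : ℝ} (hx : x ∈ Icc (0:ℝ) 1) (u : ℝ) : |centeredStep x u| ≤ 1 := by
  rw [centeredStep, abs_le]
  by_cases hu : u < x <;> simp [hu] <;> constructor <;> linarith [hx.1, hx.2]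

lemma measurable_centeredStep_comp {β : Type*} [MeasurableSpace β] {F : β → ℝ}
    (hF : Measurable F) : Measurable (Function.uncurry fun b u => centeredStep (F b) u) :=
  (measurable_const.indicator (measurableSet_lt measurable_snd (hF.comp measurable_fst))).sub
    (hF.comp measurable_fst)

section dampedStep

variable {c : ℝ}

noncomputable def dampedStep (c y u : ℝ) : ℝ :=
  (1 - c * y) * centeredStep ((1 - y) / (1 - c * y)) u

lemma one_sub_mul_pos (hc0 : 0 ≤ c) (hc1 : c < 1) {y : ℝ} (hy : y ∈ Icc (0:ℝ) 1) :
    0 < 1 - c * y := by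
  nlinarith [mul_le_mul_of_nonneg_left hy.2 hc0]

lemma one_sub_div_one_sub_mul_mem_Icc (hc0 : 0 ≤ c) (hc1 : c < 1) {y : ℝ} (hy : y ∈ Icc (0:ℝ) 1) :
    (1 - y) / (1 - c * y) ∈ Icc (0:ℝ) 1 := by
  have hβ := one_sub_mul_pos hc0 hc1 hy
  exact ⟨div_nonneg (by linarith [hy.2]) hβ.le, (div_le_one hβ).2 (by nlinarith [hy.1])⟩

lemma abs_dampedStep_le (hc0 : 0 ≤ c) (hc1 : c < 1) {y : ℝ} (hy : y ∈ Icc (0:ℝ) 1) (u : ℝ) :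
    |dampedStep c y u| ≤ 1 := by
  rw [dampedStep, abs_mul, abs_of_pos (one_sub_mul_pos hc0 hc1 hy)]
  exact mul_le_one₀ (by nlinarith [hy.1]) (abs_nonneg _)
    (abs_centeredStep_le (one_sub_div_one_sub_mul_mem_Icc hc0 hc1 hy) u)

lemma integral_centeredStep_mul_dampedStep (hc0 : 0 ≤ c) (hc1 : c < 1) {x y : ℝ}
    (hx : x ∈ Icc (0:ℝ) 1) (hy : y ∈ Icc (0:ℝ) 1) :
    ∫ u in Ioo 0 1, centeredStep x u * dampedStep c y u
      = min ((1 - c) * (x * y)) ((1 - x) * (1 - y)) := by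
  have hβ := one_sub_mul_pos hc0 hc1 hy
  have hβξ : (1 - c * y) * ((1 - y) / (1 - c * y)) = 1 - y := mul_div_cancel₀ _ hβ.ne'
  simp_rw [dampedStep, mul_left_comm (centeredStep x _)]
  rw [integral_const_mul, integral_centeredStep_mul hx (one_sub_div_one_sub_mul_mem_Icc hc0 hc1 hy),
    mul_sub, mul_min_of_nonneg _ _ hβ.le, hβξ, mul_left_comm, hβξ, ← min_sub_sub_right]
  congr 1 <;> ring

lemma integral_dampedStep_mul (hc0 : 0 ≤ c) (hc1 : c < 1) {y y' : ℝ}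
    (hy : y ∈ Icc (0:ℝ) 1) (hy' : y' ∈ Icc (0:ℝ) 1) :
    ∫ u in Ioo 0 1, dampedStep c y u * dampedStep c y' u = (1 - c) * (min y y' - y * y') := by
  wlog hyy' : y ≤ y' generalizing y y'
  · simp_rw [mul_comm (dampedStep c y _), min_comm y, mul_comm y]
    exact this hy' hy (le_of_not_ge hyy')
  have hβ := one_sub_mul_pos hc0 hc1 hy
  have hβ' := one_sub_mul_pos hc0 hc1 hy'
  have hβξ : (1 - c * y) * ((1 - y) / (1 - c * y)) = 1 - y := mul_div_cancel₀ _ hβ.ne'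
  have hβξ' : (1 - c * y') * ((1 - y') / (1 - c * y')) = 1 - y' := mul_div_cancel₀ _ hβ'.ne'
  have hξ : (1 - y') / (1 - c * y') ≤ (1 - y) / (1 - c * y) := by
    rw [div_le_div_iff₀ hβ' hβ]; nlinarith [hy.1, hy'.2]
  have hsplit (u : ℝ) : dampedStep c y u * dampedStep c y' u = ((1 - c * y) * (1 - c * y'))
      * (centeredStep ((1 - y) / (1 - c * y)) u * centeredStep ((1 - y') / (1 - c * y')) u) :=
    mul_mul_mul_comm _ _ _ _
  simp_rw [hsplit]
  rw [integral_const_mul, integral_centeredStep_mul (one_sub_div_one_sub_mul_mem_Icc hc0 hc1 hy)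
    (one_sub_div_one_sub_mul_mem_Icc hc0 hc1 hy'), min_eq_right hξ, min_eq_left hyy']
  linear_combination (1 - c * y) * (1 - (1 - y) / (1 - c * y)) * hβξ' - (1 - y') * hβξ

end dampedStep

lemma sq_integral_mul_le {α : Type*} [MeasurableSpace α] {m : Measure α} {f g : α → ℝ}
    (hf : MemLp f 2 m) (hg : MemLp g 2 m) :
    (∫ u, f u * g u ∂m) ^ 2 ≤ (∫ u, f u * f u ∂m) * ∫ u, g u * g u ∂m := by
  have hinner {f g : α → ℝ} (hf : MemLp f 2 m) (hg : MemLp g 2 m) :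
      inner ℝ (hf.toLp f) (hg.toLp g) = ∫ u, f u * g u ∂m := by
    rw [L2.inner_def]
    refine integral_congr_ae ?_
    filter_upwards [hf.coeFn_toLp, hg.coeFn_toLp] with u hfu hgu
    simp [hfu, hgu, mul_comm]
  rw [sq, ← hinner hf hg, ← hinner hf hf, ← hinner hg hg]
  exact real_inner_mul_inner_self_le _ _

section gram

variable {α β : Type*} [MeasurableSpace α] [MeasurableSpace β] {m : Measure α} {ν : Measure β}
  [IsFiniteMeasure m] [IsFiniteMeasure ν] {f g : β → α → ℝ} {C : ℝ}

lemma memLp_integral_of_bounded (hf : Measurable (Function.uncurry f))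
    (hfC : ∀ a u, |f a u| ≤ C) : MemLp (fun u => ∫ a, f a u ∂ν) 2 m := by
  refine MemLp.of_bound ?_ (C * ν.real univ) (ae_of_all _ fun u => ?_)
  · exact (StronglyMeasurable.integral_prod_right' (f := fun p : α × β => f p.2 p.1)
      (hf.comp measurable_swap).stronglyMeasurable).aestronglyMeasurable
  · exact norm_integral_le_of_norm_le_const (ae_of_all _ fun a => hfC a u)

lemma integral_integral_mul_integral (hf : Measurable (Function.uncurry f))
    (hg : Measurable (Function.uncurry g)) (hfC : ∀ a u, |f a u| ≤ C)
    (hgC : ∀ b u, |g b u| ≤ C) :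
    ∫ u, (∫ a, f a u ∂ν) * (∫ b, g b u ∂ν) ∂m
      = ∫ z, ∫ u, f z.1 u * g z.2 u ∂m ∂(ν.prod ν) := by
  simp_rw [← integral_prod_mul]
  refine integral_integral_swap (Integrable.of_bound ?_ (C * C) (ae_of_all _ fun p => ?_))
  · exact ((hf.comp (measurable_snd.fst.prodMk measurable_fst)).mul
      (hg.comp (measurable_snd.snd.prodMk measurable_fst))).aestronglyMeasurable
  · simp only [Function.uncurry, norm_mul, Real.norm_eq_abs]
    exact mul_le_mul (hfC _ _) (hgC _ _) (abs_nonneg _) ((abs_nonneg _).trans (hfC p.2.1 p.1))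

theorem sq_integral_gram_le (hf : Measurable (Function.uncurry f))
    (hg : Measurable (Function.uncurry g)) (hfC : ∀ a u, |f a u| ≤ C)
    (hgC : ∀ b u, |g b u| ≤ C) :
    (∫ z, ∫ u, f z.1 u * g z.2 u ∂m ∂(ν.prod ν)) ^ 2
      ≤ (∫ z, ∫ u, f z.1 u * f z.2 u ∂m ∂(ν.prod ν))
        * ∫ z, ∫ u, g z.1 u * g z.2 u ∂m ∂(ν.prod ν) := by
  rw [← integral_integral_mul_integral hf hg hfC hgC,
    ← integral_integral_mul_integral hf hf hfC hfC, ← integral_integral_mul_integral hg hg hgC hgC]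
  exact sq_integral_mul_le (memLp_integral_of_bounded hf hfC) (memLp_integral_of_bounded hg hgC)

theorem sq_integral_min_le {F G : β → ℝ} (hF : Measurable F) (hG : Measurable G)
    (hF01 : ∀ a, F a ∈ Icc (0:ℝ) 1) (hG01 : ∀ b, G b ∈ Icc (0:ℝ) 1) {c : ℝ} (hc0 : 0 ≤ c)
    (hc1 : c < 1) :
    (∫ z, min ((1 - c) * (F z.1 * G z.2)) ((1 - F z.1) * (1 - G z.2)) ∂(ν.prod ν)) ^ 2
      ≤ (∫ z, (min (F z.1) (F z.2) - F z.1 * F z.2) ∂(ν.prod ν))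
        * ((1 - c) * ∫ z, (min (G z.1) (G z.2) - G z.1 * G z.2) ∂(ν.prod ν)) := by
  have hξ : Measurable fun b => (1 - G b) / (1 - c * G b) :=
    (measurable_const.sub hG).div (measurable_const.sub (hG.const_mul c))
  have hψ : Measurable (Function.uncurry fun b u => dampedStep c (G b) u) :=
    ((measurable_const.sub (hG.const_mul c)).comp measurable_fst).mul
      (measurable_centeredStep_comp hξ)
  have hFF (z : β × β) := integral_centeredStep_mul (hF01 z.1) (hF01 z.2)
  have hGG (z : β × β) := integral_dampedStep_mul hc0 hc1 (hG01 z.1) (hG01 z.2)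
  have hFG (z : β × β) := integral_centeredStep_mul_dampedStep hc0 hc1 (hF01 z.1) (hG01 z.2)
  have hCS := sq_integral_gram_le (m := volume.restrict (Ioo (0:ℝ) 1)) (ν := ν)
    (measurable_centeredStep_comp hF) hψ (fun a => abs_centeredStep_le (hF01 a))
    (fun b => abs_dampedStep_le hc0 hc1 (hG01 b))
  simpa only [hFF, hGG, hFG, integral_const_mul] using hCS

end gram

section tonelli

variable {α β : Type*} [MeasurableSpace α] [MeasurableSpace β] {μ : Measure α} {ν : Measure β}
  [IsFiniteMeasure μ] [IsFiniteMeasure ν] {P : β → α → Prop}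

lemma integrable_measureReal_setOf (hP : MeasurableSet {p : β × α | P p.1 p.2}) :
    Integrable (fun b => μ.real {a | P b a}) ν :=
  Integrable.of_bound (measurable_measure_prodMk_left hP).ennreal_toReal.aestronglyMeasurable
    (μ.real univ) (ae_of_all _ fun _ => by
      simpa only [Real.norm_eq_abs, abs_of_nonneg measureReal_nonneg] using
        measureReal_mono (subset_univ _))

lemma integral_measureReal_setOf_comm (hP : MeasurableSet {p : β × α | P p.1 p.2}) :
    ∫ b, μ.real {a | P b a} ∂ν = ∫ a, ν.real {b | P b a} ∂μ := by
  have hleft : Measurable fun b => μ {a | P b a} := measurable_measure_prodMk_left hP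
  have hright : Measurable fun a => ν {b | P b a} := measurable_measure_prodMk_right hP
  simp only [Measure.real]
  rw [integral_toReal hleft.aemeasurable (ae_of_all _ fun _ => measure_lt_top _ _),
    integral_toReal hright.aemeasurable (ae_of_all _ fun _ => measure_lt_top _ _)]
  exact congrArg ENNReal.toReal ((Measure.prod_apply hP).symm.trans (Measure.prod_apply_symm hP))

end tonelli

section hoeffding

variable {Ω : Type*} [MeasurableSpace Ω] {μ : Measure Ω} {X Y : Ω → ℝ} {R : ℝ}

lemma measureReal_restrict_Icc_Iic {x : ℝ} (hx : |x| ≤ R) :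
    (volume.restrict (Icc (-R) R)).real (Iic x) = x + R := by
  have h : Iic x ∩ Icc (-R) R = Icc (-R) x := by
    ext a
    simp only [mem_inter_iff, mem_Iic, mem_Icc]
    constructor
    · rintro ⟨hax, hRa, -⟩; exact ⟨hRa, hax⟩
    · rintro ⟨hRa, hax⟩; exact ⟨hax, hRa, hax.trans (abs_le.1 hx).2⟩
  rw [measureReal_restrict_apply measurableSet_Iic, h,
    Real.volume_real_Icc_of_le (abs_le.1 hx).1, sub_neg_eq_add]

lemma antitone_measureReal_le [IsFiniteMeasure μ] (X : Ω → ℝ) :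
    Antitone fun a => μ.real {ω | a ≤ X ω} :=
  fun _ _ h => measureReal_mono fun _ hω => h.trans hω

lemma measureReal_le_and_le_eq_min [IsFiniteMeasure μ] (X : Ω → ℝ) (a b : ℝ) :
    μ.real {ω | a ≤ X ω ∧ b ≤ X ω} = min (μ.real {ω | a ≤ X ω}) (μ.real {ω | b ≤ X ω}) := by
  simp_rw [← max_le_iff]
  exact (antitone_measureReal_le X).map_max

lemma measurableSet_le_and_le (hX : Measurable X) (hY : Measurable Y) :
    MeasurableSet {p : (ℝ × ℝ) × Ω | p.1.1 ≤ X p.2 ∧ p.1.2 ≤ Y p.2} :=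
  (measurableSet_le measurable_fst.fst (hX.comp measurable_snd)).inter
    (measurableSet_le measurable_fst.snd (hY.comp measurable_snd))

lemma integrable_measureReal_le [IsFiniteMeasure μ] {ν : Measure ℝ} [IsFiniteMeasure ν]
    (hX : Measurable X) : Integrable (fun a => μ.real {ω | a ≤ X ω}) ν :=
  integrable_measureReal_setOf (P := fun a ω => a ≤ X ω)
    (measurableSet_le measurable_fst (hX.comp measurable_snd))

lemma integrable_measureReal_le_and_le [IsFiniteMeasure μ] {ν : Measure (ℝ × ℝ)}
    [IsFiniteMeasure ν] (hX : Measurable X) (hY : Measurable Y) :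
    Integrable (fun z => μ.real {ω | z.1 ≤ X ω ∧ z.2 ≤ Y ω}) ν :=
  integrable_measureReal_setOf (measurableSet_le_and_le hX hY)

lemma integral_measureReal_le [IsFiniteMeasure μ] (hX : Measurable X) (hXR : ∀ ω, |X ω| ≤ R) :
    ∫ a in Icc (-R) R, μ.real {ω | a ≤ X ω} = ∫ ω, (X ω + R) ∂μ := by
  rw [integral_measureReal_setOf_comm (P := fun a ω => a ≤ X ω)
    (measurableSet_le measurable_fst (hX.comp measurable_snd))]
  exact integral_congr_ae (ae_of_all _ fun ω => measureReal_restrict_Icc_Iic (hXR ω))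

lemma integral_measureReal_le_and_le [IsFiniteMeasure μ] (hX : Measurable X) (hY : Measurable Y)
    (hXR : ∀ ω, |X ω| ≤ R) (hYR : ∀ ω, |Y ω| ≤ R) :
    ∫ z, μ.real {ω | z.1 ≤ X ω ∧ z.2 ≤ Y ω}
        ∂((volume.restrict (Icc (-R) R)).prod (volume.restrict (Icc (-R) R)))
      = ∫ ω, (X ω + R) * (Y ω + R) ∂μ := by
  rw [integral_measureReal_setOf_comm (P := fun (z : ℝ × ℝ) ω => z.1 ≤ X ω ∧ z.2 ≤ Y ω)
    (measurableSet_le_and_le hX hY)]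
  refine integral_congr_ae (ae_of_all _ fun ω => ?_)
  change Measure.real _ (Iic (X ω) ×ˢ Iic (Y ω)) = _
  rw [Measure.real, Measure.prod_prod, ENNReal.toReal_mul, ← Measure.real, ← Measure.real,
    measureReal_restrict_Icc_Iic (hXR ω), measureReal_restrict_Icc_Iic (hYR ω)]

variable [IsProbabilityMeasure μ]

theorem covariance_eq_integral_measureReal (hX : Measurable X) (hY : Measurable Y)
    (hXR : ∀ ω, |X ω| ≤ R) (hYR : ∀ ω, |Y ω| ≤ R) :
    cov[X, Y; μ] = ∫ z, (μ.real {ω | z.1 ≤ X ω ∧ z.2 ≤ Y ω}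
        - μ.real {ω | z.1 ≤ X ω} * μ.real {ω | z.2 ≤ Y ω})
        ∂((volume.restrict (Icc (-R) R)).prod (volume.restrict (Icc (-R) R))) := by
  have hL2 {Z : Ω → ℝ} (hZ : Measurable Z) (hZR : ∀ ω, |Z ω| ≤ R) : MemLp Z 2 μ :=
    MemLp.of_bound hZ.aestronglyMeasurable R (ae_of_all _ hZR)
  rw [← covariance_add_const_left ((hL2 hX hXR).integrable one_le_two) R,
    ← covariance_add_const_right ((hL2 hY hYR).integrable one_le_two) R,
    covariance_eq_sub (X := fun ω => X ω + R) (Y := fun ω => Y ω + R)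
      ((hL2 hX hXR).add (memLp_const R)) ((hL2 hY hYR).add (memLp_const R)),
    integral_sub (integrable_measureReal_le_and_le hX hY)
      ((integrable_measureReal_le hX).mul_prod (integrable_measureReal_le hY)),
    integral_prod_mul (fun a => μ.real {ω | a ≤ X ω}) (fun b => μ.real {ω | b ≤ Y ω}),
    integral_measureReal_le hX hXR, integral_measureReal_le hY hYR,
    integral_measureReal_le_and_le hX hY hXR hYR]
  rfl

theorem variance_eq_integral_min (hX : Measurable X) (hXR : ∀ ω, |X ω| ≤ R) :
    Var[X; μ] = ∫ z, (min (μ.real {ω | z.1 ≤ X ω}) (μ.real {ω | z.2 ≤ X ω})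
        - μ.real {ω | z.1 ≤ X ω} * μ.real {ω | z.2 ≤ X ω})
        ∂((volume.restrict (Icc (-R) R)).prod (volume.restrict (Icc (-R) R))) := by
  rw [← covariance_self hX.aemeasurable, covariance_eq_integral_measureReal hX hX hXR hXR]
  simp_rw [measureReal_le_and_le_eq_min]

end hoeffding

/-- For `c = 1` this is positive quadrant dependence. -/
def QuadrantDependent {Ω : Type*} [MeasurableSpace Ω] (c : ℝ) (μ : Measure Ω) (X Y : Ω → ℝ) :
    Prop :=
  ∀ a b : ℝ, c * μ.real {ω | a ≤ X ω} * μ.real {ω | b ≤ Y ω} ≤ μ.real {ω | a ≤ X ω ∧ b ≤ Y ω}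

lemma neg_min_le_sub_mul {c x y h : ℝ} (hc : c * x * y ≤ h) (hf : x + y - 1 ≤ h) :
    -min ((1 - c) * (x * y)) ((1 - x) * (1 - y)) ≤ h - x * y :=
  neg_le.2 (le_min (by linarith) (by linarith))

section bounded

variable {Ω : Type*} [MeasurableSpace Ω] {μ : Measure Ω} [IsProbabilityMeasure μ]
  {X Y : Ω → ℝ} {c R : ℝ}

lemma measureReal_add_measureReal_sub_one_le_inter {s t : Set Ω} (ht : MeasurableSet t) :
    μ.real s + μ.real t - 1 ≤ μ.real (s ∩ t) := by
  linarith [measureReal_union_add_inter (s := s) ht (μ := μ),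
    measureReal_le_one (μ := μ) (s := s ∪ t)]

theorem neg_integral_min_le_covariance (hX : Measurable X) (hY : Measurable Y)
    (hXR : ∀ ω, |X ω| ≤ R) (hYR : ∀ ω, |Y ω| ≤ R) (hXY : QuadrantDependent c μ X Y) :
    -∫ z, min ((1 - c) * (μ.real {ω | z.1 ≤ X ω} * μ.real {ω | z.2 ≤ Y ω}))
        ((1 - μ.real {ω | z.1 ≤ X ω}) * (1 - μ.real {ω | z.2 ≤ Y ω}))
        ∂((volume.restrict (Icc (-R) R)).prod (volume.restrict (Icc (-R) R)))
      ≤ cov[X, Y; μ] := by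
  have hF := integrable_measureReal_le (μ := μ) (ν := volume.restrict (Icc (-R) R)) hX
  have hG := integrable_measureReal_le (μ := μ) (ν := volume.restrict (Icc (-R) R)) hY
  have hK := ((hF.mul_prod hG).const_mul (1 - c)).inf
    (((integrable_const 1).sub hF).mul_prod ((integrable_const 1).sub hG))
  rw [covariance_eq_integral_measureReal hX hY hXR hYR, ← integral_neg]
  refine integral_mono hK.neg ((integrable_measureReal_le_and_le hX hY).sub
    (hF.mul_prod hG)) fun z => ?_
  exact neg_min_le_sub_mul (hXY z.1 z.2)
    (measureReal_add_measureReal_sub_one_le_inter (measurableSet_le measurable_const hY))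

theorem neg_sqrt_le_covariance_of_bounded (hX : Measurable X) (hY : Measurable Y)
    (hXR : ∀ ω, |X ω| ≤ R) (hYR : ∀ ω, |Y ω| ≤ R) (hc0 : 0 ≤ c) (hc1 : c < 1)
    (hXY : QuadrantDependent c μ X Y) :
    -√((1 - c) * Var[X; μ] * Var[Y; μ]) ≤ cov[X, Y; μ] := by
  have hCS := sq_integral_min_le (ν := volume.restrict (Icc (-R) R))
    (antitone_measureReal_le (μ := μ) X).measurable (antitone_measureReal_le (μ := μ) Y).measurable
    (fun _ => ⟨measureReal_nonneg, measureReal_le_one⟩)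
    (fun _ => ⟨measureReal_nonneg, measureReal_le_one⟩) hc0 hc1
  rw [← variance_eq_integral_min hX hXR, ← variance_eq_integral_min hY hYR] at hCS
  refine le_trans (neg_le_neg ((le_abs_self _).trans (Real.abs_le_sqrt ?_)))
    (neg_integral_min_le_covariance hX hY hXR hYR hXY)
  linarith

end bounded

noncomputable def clamp (R x : ℝ) : ℝ := max (-R) (min R x)

section clamp

variable {R : ℝ}

lemma abs_clamp_le (hR : 0 ≤ R) (x : ℝ) : |clamp R x| ≤ R :=
  abs_le.2 ⟨le_max_left _ _, max_le (by linarith) (min_le_left _ _)⟩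

lemma abs_clamp_le_abs (hR : 0 ≤ R) (x : ℝ) : |clamp R x| ≤ |x| := by
  rw [clamp, abs_le]
  constructor
  · rcases le_total R |x| with h | h
    · exact (neg_le_neg h).trans (le_max_left _ _)
    · exact (neg_abs_le x).trans (le_max_of_le_right (le_min ((le_abs_self x).trans h) le_rfl))
  · exact max_le (by linarith [abs_nonneg x]) ((min_le_right _ _).trans (le_abs_self x))

lemma clamp_of_abs_le {x : ℝ} (hx : |x| ≤ R) : clamp R x = x := by
  rw [clamp, min_eq_right (abs_le.1 hx).2, max_eq_right (abs_le.1 hx).1]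

lemma tendsto_clamp (x : ℝ) : Tendsto (fun n : ℕ => clamp n x) atTop (𝓝 x) :=
  tendsto_const_nhds.congr' <| (eventually_ge_atTop ⌈|x|⌉₊).mono fun _ hn =>
    (clamp_of_abs_le ((Nat.le_ceil _).trans (Nat.cast_le.2 hn))).symm

lemma setOf_le_clamp_trichotomy (a : ℝ) :
    {x | a ≤ clamp R x} = univ ∨ {x | a ≤ clamp R x} = {x | a ≤ x} ∨
      {x | a ≤ clamp R x} = ∅ := by
  rcases le_or_gt a (-R) with ha | ha
  · exact Or.inl (eq_univ_of_forall fun x => ha.trans (le_max_left _ _))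
  rcases le_or_gt a R with ha' | ha'
  · refine Or.inr (Or.inl (ext fun x => ?_))
    simp only [mem_ofPred_eq, clamp, le_max_iff, le_min_iff, not_le.2 ha, false_or,
      ha', true_and]
  · refine Or.inr (Or.inr (eq_empty_of_forall_notMem fun x hx => ?_))
    simp only [mem_ofPred_eq, clamp, le_max_iff, le_min_iff] at hx
    rcases hx with hx | hx
    · linarith
    · linarith [hx.1]

end clamp

section truncation

variable {Ω : Type*} [MeasurableSpace Ω] {μ : Measure Ω} [IsProbabilityMeasure μ]
  {X Y : Ω → ℝ} {c : ℝ}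

lemma QuadrantDependent.clamp_comp (hXY : QuadrantDependent c μ X Y) (hc1 : c ≤ 1) (R : ℝ) :
    QuadrantDependent c μ (fun ω => clamp R (X ω)) (fun ω => clamp R (Y ω)) := by
  intro a b
  have hpre (Z : Ω → ℝ) (t : ℝ) : {ω | t ≤ clamp R (Z ω)} = Z ⁻¹' {x | t ≤ clamp R x} := rfl
  have hpre2 : {ω | a ≤ clamp R (X ω) ∧ b ≤ clamp R (Y ω)}
      = X ⁻¹' {x | a ≤ clamp R x} ∩ Y ⁻¹' {y | b ≤ clamp R y} := rfl
  have hF := measureReal_nonneg (μ := μ) (s := {ω | a ≤ X ω})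
  have hG := measureReal_nonneg (μ := μ) (s := {ω | b ≤ Y ω})
  rw [hpre, hpre, hpre2]
  rcases setOf_le_clamp_trichotomy (R := R) a with ha | ha | ha <;>
  rcases setOf_le_clamp_trichotomy (R := R) b with hb | hb | hb <;>
  simp only [ha, hb, preimage_ofPred_eq, preimage_univ, preimage_empty, univ_inter, inter_univ,
    empty_inter, inter_empty, probReal_univ, measureReal_empty, mul_zero, zero_mul, mul_one,
    le_refl]
  all_goals first
    | exact hXY a b
    | nlinarith

lemma memLp_clamp_comp (hX : AEStronglyMeasurable X μ) (n : ℕ) :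
    MemLp (fun ω => clamp n (X ω)) 2 μ :=
  MemLp.of_bound
    ((continuous_const.max (continuous_const.min continuous_id)).comp_aestronglyMeasurable hX)
    n (ae_of_all _ fun ω => abs_clamp_le n.cast_nonneg (X ω))

lemma tendsto_covariance_clamp (hX : MemLp X 2 μ) (hY : MemLp Y 2 μ) :
    Tendsto (fun n : ℕ => cov[fun ω => clamp n (X ω), fun ω => clamp n (Y ω); μ]) atTop
      (𝓝 cov[X, Y; μ]) := by
  have hmean {Z : Ω → ℝ} (hZ : MemLp Z 2 μ) :
      Tendsto (fun n : ℕ => ∫ ω, clamp n (Z ω) ∂μ) atTop (𝓝 (∫ ω, Z ω ∂μ)) :=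
    tendsto_integral_of_dominated_convergence _ (fun n => (memLp_clamp_comp hZ.1 n).1)
      (hZ.integrable one_le_two).norm
      (fun n => ae_of_all _ fun ω => abs_clamp_le_abs n.cast_nonneg (Z ω))
      (ae_of_all _ fun ω => tendsto_clamp (Z ω))
  have hprod : Tendsto (fun n : ℕ => ∫ ω, clamp n (X ω) * clamp n (Y ω) ∂μ) atTop
      (𝓝 (∫ ω, X ω * Y ω ∂μ)) :=
    tendsto_integral_of_dominated_convergence _
      (fun n => (memLp_clamp_comp hX.1 n).1.mul (memLp_clamp_comp hY.1 n).1)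
      (hX.integrable_mul hY).norm
      (fun n => ae_of_all _ fun ω => by
        simp only [Pi.mul_apply, norm_mul, Real.norm_eq_abs]
        exact mul_le_mul (abs_clamp_le_abs n.cast_nonneg _) (abs_clamp_le_abs n.cast_nonneg _)
          (abs_nonneg _) (abs_nonneg _))
      (ae_of_all _ fun ω => (tendsto_clamp (X ω)).mul (tendsto_clamp (Y ω)))
  simp_rw [covariance_eq_sub (memLp_clamp_comp hX.1 _) (memLp_clamp_comp hY.1 _),
    covariance_eq_sub hX hY]
  exact hprod.sub ((hmean hX).mul (hmean hY))

theorem neg_sqrt_le_covariance_of_measurable (hXm : Measurable X) (hYm : Measurable Y)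
    (hX : MemLp X 2 μ) (hY : MemLp Y 2 μ) (hc0 : 0 ≤ c) (hc1 : c < 1)
    (hXY : QuadrantDependent c μ X Y) :
    -√((1 - c) * Var[X; μ] * Var[Y; μ]) ≤ cov[X, Y; μ] := by
  have hvar {Z : Ω → ℝ} (hZ : MemLp Z 2 μ) :
      Tendsto (fun n : ℕ => Var[fun ω => clamp n (Z ω); μ]) atTop (𝓝 Var[Z; μ]) := by
    simp_rw [← covariance_self (memLp_clamp_comp hZ.1 _).aemeasurable,
      ← covariance_self hZ.aemeasurable]
    exact tendsto_covariance_clamp hZ hZ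
  refine le_of_tendsto_of_tendsto' ((tendsto_const_nhds.mul (hvar hX)).mul (hvar hY)).sqrt.neg
    (tendsto_covariance_clamp hX hY) fun n => ?_
  have hclamp {Z : Ω → ℝ} (hZ : Measurable Z) : Measurable fun ω => clamp n (Z ω) :=
    measurable_const.max (measurable_const.min hZ)
  exact neg_sqrt_le_covariance_of_bounded (hclamp hXm) (hclamp hYm)
    (fun ω => abs_clamp_le n.cast_nonneg (X ω)) (fun ω => abs_clamp_le n.cast_nonneg (Y ω))
    hc0 hc1 (hXY.clamp_comp hc1.le n)

end truncation

section aeEq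

variable {Ω : Type*} [MeasurableSpace Ω] {μ : Measure Ω} {X X' Y Y' : Ω → ℝ} {c : ℝ}

lemma covariance_congr_ae (hX : X =ᵐ[μ] X') (hY : Y =ᵐ[μ] Y') :
    cov[X, Y; μ] = cov[X', Y'; μ] := by
  rw [covariance, covariance, integral_congr_ae hX, integral_congr_ae hY]
  exact integral_congr_ae (by filter_upwards [hX, hY] with ω hXω hYω; rw [hXω, hYω])

lemma QuadrantDependent.congr_ae (hXY : QuadrantDependent c μ X Y) (hX : X =ᵐ[μ] X')
    (hY : Y =ᵐ[μ] Y') : QuadrantDependent c μ X' Y' := by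
  intro a b
  have hmarg {Z Z' : Ω → ℝ} (hZ : Z =ᵐ[μ] Z') (t : ℝ) :
      {ω | t ≤ Z ω} =ᵐ[μ] {ω | t ≤ Z' ω} := by
    filter_upwards [hZ] with ω hω
    change (t ≤ Z ω) = (t ≤ Z' ω)
    rw [hω]
  have hjoint : {ω | a ≤ X ω ∧ b ≤ Y ω} =ᵐ[μ] {ω | a ≤ X' ω ∧ b ≤ Y' ω} := by
    filter_upwards [hX, hY] with ω hXω hYω
    change (a ≤ X ω ∧ b ≤ Y ω) = (a ≤ X' ω ∧ b ≤ Y' ω)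
    rw [hXω, hYω]
  rw [← measureReal_congr (hmarg hX a), ← measureReal_congr (hmarg hY b),
    ← measureReal_congr hjoint]
  exact hXY a b

theorem neg_sqrt_le_covariance [IsProbabilityMeasure μ] (hX : MemLp X 2 μ) (hY : MemLp Y 2 μ)
    (hc0 : 0 ≤ c) (hc1 : c < 1) (hXY : QuadrantDependent c μ X Y) :
    -√((1 - c) * Var[X; μ] * Var[Y; μ]) ≤ cov[X, Y; μ] := by
  have hXe := hX.1.ae_eq_mk
  have hYe := hY.1.ae_eq_mk
  rw [variance_congr hXe, variance_congr hYe, covariance_congr_ae hXe hYe]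
  exact neg_sqrt_le_covariance_of_measurable hX.1.stronglyMeasurable_mk.measurable
    hY.1.stronglyMeasurable_mk.measurable (hX.ae_eq hXe) (hY.ae_eq hYe) hc0 hc1
    (hXY.congr_ae hXe hYe)

end aeEq

/-- Theorem 2.3: if `P(X ≥ a, Y ≥ b) ≥ c·P(X ≥ a)·P(Y ≥ b)` for all
`a, b`, with `c ∈ [0,1)`, then `Cov(X,Y) ≥ −√((1−c)·Var(X)·Var(Y))`. -/
theorem stmt_5 {Ω : Type*} [MeasurableSpace Ω] (μ : Measure Ω) [IsProbabilityMeasure μ]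
    (X Y : Ω → ℝ) (hX : MemLp X 2 μ) (hY : MemLp Y 2 μ)
    (c : ℝ) (hc0 : 0 ≤ c) (hc1 : c < 1)
    (hcond : ∀ a b : ℝ,
      c * (μ {ω | a ≤ X ω}).toReal * (μ {ω | b ≤ Y ω}).toReal ≤
        (μ {ω | a ≤ X ω ∧ b ≤ Y ω}).toReal) :
    (∫ ω, X ω * Y ω ∂μ) - (∫ ω, X ω ∂μ) * (∫ ω, Y ω ∂μ) ≥
      -Real.sqrt ((1 - c) * ((∫ ω, X ω ^ 2 ∂μ) - (∫ ω, X ω ∂μ) ^ 2) *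
        ((∫ ω, Y ω ^ 2 ∂μ) - (∫ ω, Y ω ∂μ) ^ 2)) := by
  have h := neg_sqrt_le_covariance hX hY hc0 hc1 hcond
  rwa [covariance_eq_sub hX hY, variance_eq_sub hX, variance_eq_sub hY] at h
end

section
/- Let c ∈ [0,1) and let α, β be Borel measures on [0,1]. Then K_c(α,β)² ≤ K(α,α^R)·K(β,β^R), where the inequality is interpreted in [0,∞]. -/
/-!
For `u, v ∈ [0,1]`, the Brownian bridge covariance `min u v · (1 - max u v)`, which equals
`min (u (1-v)) ((1-u) v)`, is the Lebesgue measure of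
`{p ∈ [0,1]² | p.1 < u < p.2 ∧ p.1 < v < p.2}`, so it is the Gram kernel of the indicators of the
boxes `(-∞,u) × (u,∞)` in `L²([0,1]²)`. Rescaling, `min (a b') (b a')` (for `a, b, a', b' ≥ 0`)
is the Gram kernel of the features `(a + b) · 1_{box (a / (a + b))}`. Taking `a = √(1-c) x`,
`b = (1-x)/√(1-c)` for `x` and `a' = 1-y`, `b' = y` for `y`, the integrand of `K_c` becomes the
cross Gram kernel of the two families, and the integrands of `K(α,α^R)` and `K(β,β^R)` their own
Gram kernels. For s-finite `α, β`, Tonelli followed by Cauchy–Schwarz in `L²([0,1]²)` proves the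
inequality.

For general measures, all integrands vanish at the endpoints, so `α, β` may be restricted to
`(0,1)`. There, with `w x = min x (1-x) > 0`, the integrand of `K(γ,γ^R)` dominates `w x · w x'`,
so `(∫ w dγ)² ≤ K(γ,γ^R)`. Hence either `K(γ,γ^R) = ∞`, or `γ` restricted to `(0,1)` is σ-finite;
and `K(γ,γ^R) = 0` forces `γ (0,1) = 0`.
-/

open MeasureTheory

/-- The reversal `λ^R` of a Borel measure on `[0,1]`, i.e. the image of `λ` under
`x ↦ 1 − x` (so that `λ^R(E) = λ({1 − x : x ∈ E})`). -/
noncomputable def revM (lam : Measure (Set.Icc (0 : ℝ) 1)) : Measure (Set.Icc (0 : ℝ) 1) :=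
  lam.map (fun x => ⟨1 - x.1,
    Set.mem_Icc.mpr ⟨by linarith [(Set.mem_Icc.mp x.2).2], by linarith [(Set.mem_Icc.mp x.2).1]⟩⟩)

/-- The bilinear functional
`K_c(λ,ν) = ∫∫ min{√(1−c)·xy, (1−x)(1−y)/√(1−c)} dλ(x) dν(y)`, valued in `[0,∞]`.
For `c = 0` this is the functional `K(λ,ν) = ∫∫ min{xy, (1−x)(1−y)} dλ(x) dν(y)`. -/
noncomputable def Kc (c : ℝ) (lam nu : Measure (Set.Icc (0 : ℝ) 1)) : ENNReal :=
  ∫⁻ x, ∫⁻ y, ENNReal.ofReal (min (Real.sqrt (1 - c) * (x.1 * y.1))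
    ((1 - x.1) * (1 - y.1) / Real.sqrt (1 - c))) ∂nu ∂lam

open Set
open scoped ENNReal

theorem ENNReal.lintegral_mul_sq_le {P : Type*} [MeasurableSpace P] (μ : Measure P)
    {f g : P → ℝ≥0∞} (hf : AEMeasurable f μ) (hg : AEMeasurable g μ) :
    (∫⁻ p, f p * g p ∂μ) ^ 2 ≤ (∫⁻ p, f p * f p ∂μ) * ∫⁻ p, g p * g p ∂μ := by
  have hsq (z : ℝ≥0∞) : z ^ (2 : ℝ) = z * z := by rw [ENNReal.rpow_two, sq]
  have hcs := ENNReal.lintegral_mul_le_Lp_mul_Lq μ Real.HolderConjugate.two_two hf hg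
  simp only [Pi.mul_apply, hsq] at hcs
  calc (∫⁻ p, f p * g p ∂μ) ^ 2
      ≤ ((∫⁻ p, f p * f p ∂μ) ^ (1 / 2 : ℝ) * (∫⁻ p, g p * g p ∂μ) ^ (1 / 2 : ℝ)) ^ 2 := by
        gcongr
    _ = (∫⁻ p, f p * f p ∂μ) * ∫⁻ p, g p * g p ∂μ := by
        rw [mul_pow, ← ENNReal.rpow_natCast, ← ENNReal.rpow_natCast, ← ENNReal.rpow_mul,
          ← ENNReal.rpow_mul]
        norm_num

section Gram

variable {X Y P : Type*} [MeasurableSpace X] [MeasurableSpace Y] [MeasurableSpace P]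
  {α : Measure X} {β : Measure Y} {μ : Measure P} [SFinite α] [SFinite β] [SFinite μ]
  {F : X → P → ℝ≥0∞} {H : Y → P → ℝ≥0∞}

theorem lintegral_lintegral_lintegral_mul (hF : Measurable (Function.uncurry F))
    (hH : Measurable (Function.uncurry H)) :
    ∫⁻ x, ∫⁻ y, ∫⁻ p, F x p * H y p ∂μ ∂β ∂α =
      ∫⁻ p, (∫⁻ x, F x p ∂α) * ∫⁻ y, H y p ∂β ∂μ := by
  have hHint : Measurable fun p => ∫⁻ y, H y p ∂β :=
    (hH.comp measurable_swap).lintegral_prod_right'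
  have inner (x : X) :
      ∫⁻ y, ∫⁻ p, F x p * H y p ∂μ ∂β = ∫⁻ p, F x p * ∫⁻ y, H y p ∂β ∂μ := by
    rw [lintegral_lintegral_swap ((hF.of_uncurry_left.comp measurable_snd).mul hH).aemeasurable]
    exact lintegral_congr fun p => lintegral_const_mul _ hH.of_uncurry_right
  simp_rw [inner]
  rw [lintegral_lintegral_swap (hF.mul (hHint.comp measurable_snd)).aemeasurable]
  exact lintegral_congr fun p => lintegral_mul_const _ hF.of_uncurry_right

theorem lintegral_gram_sq_le (hF : Measurable (Function.uncurry F))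
    (hH : Measurable (Function.uncurry H)) :
    (∫⁻ x, ∫⁻ y, ∫⁻ p, F x p * H y p ∂μ ∂β ∂α) ^ 2 ≤
      (∫⁻ x, ∫⁻ x', ∫⁻ p, F x p * F x' p ∂μ ∂α ∂α) *
        ∫⁻ y, ∫⁻ y', ∫⁻ p, H y p * H y' p ∂μ ∂β ∂β := by
  rw [lintegral_lintegral_lintegral_mul hF hH, lintegral_lintegral_lintegral_mul hF hF,
    lintegral_lintegral_lintegral_mul hH hH]
  exact ENNReal.lintegral_mul_sq_le μ (hF.comp measurable_swap).lintegral_prod_right'.aemeasurable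
    (hH.comp measurable_swap).lintegral_prod_right'.aemeasurable

end Gram

theorem MeasureTheory.sigmaFinite_restrict_support_of_lintegral_ne_top {X : Type*}
    [MeasurableSpace X] {μ : Measure X} {f : X → ℝ≥0∞} (hf : Measurable f)
    (h : ∫⁻ x, f x ∂μ ≠ ∞) : SigmaFinite (μ.restrict (Function.support f)) := by
  refine Measure.sigmaFinite_of_countable (S := insert (Function.support f)ᶜ
    (range fun n : ℕ => {x | ((n : ℝ≥0∞) + 1)⁻¹ ≤ f x})) ((countable_range _).insert _) ?_ ?_
  · rintro s (rfl | ⟨n, rfl⟩)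
    · rw [Measure.restrict_apply' (measurableSet_support hf), compl_inter_self, measure_empty]
      exact ENNReal.zero_lt_top
    · calc μ.restrict (Function.support f) {x | ((n : ℝ≥0∞) + 1)⁻¹ ≤ f x}
          ≤ μ {x | ((n : ℝ≥0∞) + 1)⁻¹ ≤ f x} := Measure.restrict_le_self _
        _ ≤ (∫⁻ x, f x ∂μ) / ((n : ℝ≥0∞) + 1)⁻¹ :=
          meas_ge_le_lintegral_div hf.aemeasurable (by simp) (by simp)
        _ < ∞ := ENNReal.div_lt_top h (by simp)
  · refine eq_univ_of_forall fun x => ?_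
    by_cases hx : f x = 0
    · exact mem_sUnion_of_mem (by simpa using hx) (mem_insert _ _)
    · obtain ⟨n, hn⟩ := ENNReal.exists_inv_nat_lt hx
      exact mem_sUnion_of_mem (show x ∈ {x | ((n : ℝ≥0∞) + 1)⁻¹ ≤ f x} from
        (ENNReal.inv_le_inv.mpr le_self_add).trans hn.le)
        (mem_insert_of_mem _ ⟨n, rfl⟩)

theorem min_mul_one_sub_max (u v : ℝ) :
    min u v * (1 - max u v) = min (u * (1 - v)) ((1 - u) * v) := by
  rcases le_total u v with h | h
  · rw [min_eq_left h, max_eq_right h, min_eq_left (by nlinarith)]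
  · rw [min_eq_right h, max_eq_left h, min_eq_right (by nlinarith), mul_comm]

namespace BridgeKernel

noncomputable def unitSq : Measure (ℝ × ℝ) :=
  (volume.restrict (Icc 0 1)).prod (volume.restrict (Icc 0 1))

instance : SFinite unitSq := by
  unfold unitSq
  infer_instance

def box (u : ℝ) : Set (ℝ × ℝ) := Iio u ×ˢ Ioi u

lemma box_inter_box (u v : ℝ) : box u ∩ box v = Iio (min u v) ×ˢ Ioi (max u v) := by
  ext p
  simp only [box, mem_inter_iff, mem_prod, mem_Iio, mem_Ioi, lt_min_iff, max_lt_iff]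
  tauto

lemma unitSq_Iio_prod_Ioi {a b : ℝ} (ha : a ∈ Icc (0 : ℝ) 1) (hb : b ∈ Icc (0 : ℝ) 1) :
    unitSq (Iio a ×ˢ Ioi b) = ENNReal.ofReal (a * (1 - b)) := by
  have hIio : Iio a ∩ Icc 0 1 = Ico 0 a := by
    ext x
    simp only [mem_inter_iff, mem_Iio, mem_Icc, mem_Ico]
    grind
  have hIoi : Ioi b ∩ Icc 0 1 = Ioc b 1 := by
    ext x
    simp only [mem_inter_iff, mem_Ioi, mem_Icc, mem_Ioc]
    grind
  rw [unitSq, Measure.prod_prod, Measure.restrict_apply measurableSet_Iio,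
    Measure.restrict_apply measurableSet_Ioi, hIio, hIoi, Real.volume_Ico, Real.volume_Ioc,
    sub_zero, ENNReal.ofReal_mul ha.1]

lemma lintegral_indicator_box_mul {u v : ℝ} (hu : u ∈ Icc (0 : ℝ) 1) (hv : v ∈ Icc (0 : ℝ) 1) :
    ∫⁻ p, (box u).indicator 1 p * (box v).indicator 1 p ∂unitSq =
      ENNReal.ofReal (min (u * (1 - v)) ((1 - u) * v)) := by
  have hmin : min u v ∈ Icc (0 : ℝ) 1 := ⟨le_min hu.1 hv.1, min_le_of_left_le hu.2⟩
  have hmax : max u v ∈ Icc (0 : ℝ) 1 := ⟨le_max_of_le_left hu.1, max_le hu.2 hv.2⟩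
  have hinter (p : ℝ × ℝ) :
      (box u).indicator (1 : ℝ × ℝ → ℝ≥0∞) p * (box v).indicator 1 p =
        (box u ∩ box v).indicator 1 p := by
    rw [inter_indicator_one, Pi.mul_apply]
  rw [lintegral_congr hinter, box_inter_box,
    lintegral_indicator_one (measurableSet_Iio.prod measurableSet_Ioi),
    unitSq_Iio_prod_Ioi hmin hmax, min_mul_one_sub_max]

-- For `a + b = 0` the box is junk (`a / 0 = 0`), but its weight vanishes.
noncomputable def feature (a b : ℝ) : ℝ × ℝ → ℝ≥0∞ :=
  ENNReal.ofReal (a + b) • (box (a / (a + b))).indicator 1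

lemma lintegral_feature_mul_feature {a b a' b' : ℝ} (ha : 0 ≤ a) (hb : 0 ≤ b) (ha' : 0 ≤ a')
    (hb' : 0 ≤ b') :
    ∫⁻ p, feature a b p * feature a' b' p ∂unitSq = ENNReal.ofReal (min (a * b') (b * a')) := by
  have split : ∀ {a b : ℝ}, 0 ≤ a → 0 ≤ b → a / (a + b) ∈ Icc (0 : ℝ) 1 ∧
      (a + b) * (a / (a + b)) = a ∧ (a + b) * (1 - a / (a + b)) = b := by
    intro a b ha hb
    rcases (add_nonneg ha hb).eq_or_lt with h | h
    · obtain ⟨rfl, rfl⟩ : a = 0 ∧ b = 0 := by constructor <;> linarith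
      simp
    · refine ⟨⟨by positivity, div_le_one_of_le₀ (by linarith) h.le⟩, mul_div_cancel₀ _ h.ne', ?_⟩
      rw [mul_one_sub, mul_div_cancel₀ _ h.ne', add_sub_cancel_left]
  obtain ⟨hu, hsu, hsu₁⟩ := split ha hb
  obtain ⟨hu', hsu', hsu₁'⟩ := split ha' hb'
  simp only [feature, Pi.smul_apply, smul_eq_mul]
  generalize a / (a + b) = u at hu hsu hsu₁ ⊢
  generalize a' / (a' + b') = u' at hu' hsu' hsu₁' ⊢
  calc ∫⁻ p, ENNReal.ofReal (a + b) * (box u).indicator 1 p *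
        (ENNReal.ofReal (a' + b') * (box u').indicator 1 p) ∂unitSq
      = ENNReal.ofReal ((a + b) * (a' + b')) * ∫⁻ p, (box u).indicator 1 p *
          (box u').indicator 1 p ∂unitSq := by
        rw [← lintegral_const_mul' _ _ ENNReal.ofReal_ne_top, ENNReal.ofReal_mul (by linarith)]
        congr 1 with p
        ring
    _ = ENNReal.ofReal (min (a * b') (b * a')) := by
        rw [lintegral_indicator_box_mul hu hu', ← ENNReal.ofReal_mul (by positivity),
          mul_min_of_nonneg _ _ (by positivity)]
        congr 2
        · linear_combination ((a' + b') * (1 - u')) * hsu + a * hsu₁'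
        · linear_combination ((a' + b') * u') * hsu₁ + b * hsu'

theorem measurable_uncurry_feature {X : Type*} [MeasurableSpace X] {a b : X → ℝ}
    (ha : Measurable a) (hb : Measurable b) :
    Measurable (Function.uncurry fun x => feature (a x) (b x)) := by
  have hu : Measurable fun x => a x / (a x + b x) := ha.div (ha.add hb)
  have hbox : MeasurableSet {z : X × (ℝ × ℝ) | z.2 ∈ box (a z.1 / (a z.1 + b z.1))} :=
    (measurableSet_lt measurable_snd.fst (hu.comp measurable_fst)).inter
      (measurableSet_lt (hu.comp measurable_fst) measurable_snd.snd)
  exact (((ha.add hb).ennreal_ofReal.comp measurable_fst).mul (measurable_one.indicator hbox) :)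

end BridgeKernel

lemma measurable_reflect :
    Measurable fun x : Icc (0 : ℝ) 1 => (⟨1 - x.1, mem_Icc.mpr
      ⟨by linarith [(mem_Icc.mp x.2).2], by linarith [(mem_Icc.mp x.2).1]⟩⟩ : Icc (0 : ℝ) 1) :=
  (measurable_const.sub measurable_subtype_coe).subtype_mk

lemma revM_mono {γ γ' : Measure (Icc (0 : ℝ) 1)} (h : γ' ≤ γ) : revM γ' ≤ revM γ :=
  Measure.map_mono h measurable_reflect

namespace Kc

open BridgeKernel

variable {c : ℝ}

noncomputable def integrand (c : ℝ) (x y : Icc (0 : ℝ) 1) : ℝ≥0∞ :=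
  ENNReal.ofReal (min (√(1 - c) * (x * y)) ((1 - x) * (1 - y) / √(1 - c)))

noncomputable def featureLeft (c : ℝ) (x : Icc (0 : ℝ) 1) : ℝ × ℝ → ℝ≥0∞ :=
  feature (√(1 - c) * x) ((1 - x) / √(1 - c))

noncomputable def featureRight (y : Icc (0 : ℝ) 1) : ℝ × ℝ → ℝ≥0∞ :=
  feature (1 - y) y

lemma measurable_featureLeft (c : ℝ) : Measurable (Function.uncurry (featureLeft c)) :=
  measurable_uncurry_feature (by fun_prop) (by fun_prop)

lemma measurable_featureRight : Measurable (Function.uncurry featureRight) :=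
  measurable_uncurry_feature (by fun_prop) (by fun_prop)

lemma lintegral_featureLeft_mul_featureRight (hc : c < 1) (x y : Icc (0 : ℝ) 1) :
    ∫⁻ p, featureLeft c x p * featureRight y p ∂unitSq = integrand c x y := by
  have hs : 0 < √(1 - c) := Real.sqrt_pos.mpr (by linarith)
  rw [featureLeft, featureRight, lintegral_feature_mul_feature (by have := x.2.1; positivity)
    (div_nonneg (by linarith [x.2.2]) hs.le) (by linarith [y.2.2]) y.2.1, integrand]
  congr 2 <;> ring

lemma lintegral_featureLeft_mul_featureLeft (hc : c < 1) (x x' : Icc (0 : ℝ) 1) :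
    ∫⁻ p, featureLeft c x p * featureLeft c x' p ∂unitSq =
      ENNReal.ofReal (min (x * (1 - x')) ((1 - x) * x')) := by
  have hs : 0 < √(1 - c) := Real.sqrt_pos.mpr (by linarith)
  rw [featureLeft, featureLeft, lintegral_feature_mul_feature (by have := x.2.1; positivity)
    (div_nonneg (by linarith [x.2.2]) hs.le) (by have := x'.2.1; positivity)
    (div_nonneg (by linarith [x'.2.2]) hs.le)]
  congr 2 <;> field_simp

lemma lintegral_featureRight_mul_featureRight (y y' : Icc (0 : ℝ) 1) :
    ∫⁻ p, featureRight y p * featureRight y' p ∂unitSq =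
      ENNReal.ofReal (min (y * (1 - y')) ((1 - y) * y')) := by
  rw [featureRight, featureRight, lintegral_feature_mul_feature (by linarith [y.2.2]) y.2.1
    (by linarith [y'.2.2]) y'.2.1, min_comm, mul_comm (y : ℝ)]

lemma zero_revM_eq_lintegral (γ : Measure (Icc (0 : ℝ) 1)) :
    Kc 0 γ (revM γ) = ∫⁻ x, ∫⁻ x', ENNReal.ofReal (min (x * (1 - x')) ((1 - x) * x')) ∂γ ∂γ := by
  refine lintegral_congr fun x => ?_
  rw [revM, lintegral_map (by fun_prop) measurable_reflect]
  simp only [sub_zero, Real.sqrt_one, one_mul, div_one, sub_sub_cancel]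

theorem sq_le_of_sFinite (hc : c < 1) (α β : Measure (Icc (0 : ℝ) 1)) [SFinite α] [SFinite β] :
    Kc c α β ^ 2 ≤ Kc 0 α (revM α) * Kc 0 β (revM β) := by
  have h := lintegral_gram_sq_le (α := α) (β := β) (μ := unitSq) (measurable_featureLeft c)
    measurable_featureRight
  simp only [lintegral_featureLeft_mul_featureRight hc, lintegral_featureLeft_mul_featureLeft hc,
    lintegral_featureRight_mul_featureRight] at h
  rwa [zero_revM_eq_lintegral, zero_revM_eq_lintegral]

noncomputable def boundaryDist (x : Icc (0 : ℝ) 1) : ℝ≥0∞ := ENNReal.ofReal (min x.1 (1 - x.1))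

lemma measurable_boundaryDist : Measurable boundaryDist := by
  unfold boundaryDist
  fun_prop

lemma lintegral_boundaryDist_sq_le (γ : Measure (Icc (0 : ℝ) 1)) :
    (∫⁻ x, boundaryDist x ∂γ) ^ 2 ≤ Kc 0 γ (revM γ) := by
  rw [sq, ← lintegral_lintegral_mul measurable_boundaryDist.aemeasurable
    measurable_boundaryDist.aemeasurable, zero_revM_eq_lintegral]
  refine lintegral_mono fun x => lintegral_mono fun x' => ?_
  obtain ⟨hx0, hx1⟩ := x.2
  obtain ⟨hx'0, hx'1⟩ := x'.2
  have hw' : 0 ≤ min x'.1 (1 - x'.1) := le_min hx'0 (by linarith)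
  rw [boundaryDist, boundaryDist, ← ENNReal.ofReal_mul (le_min hx0 (by linarith))]
  refine ENNReal.ofReal_le_ofReal (le_min ?_ ?_)
  · exact mul_le_mul (min_le_left _ _) (min_le_right _ _) hw' hx0
  · exact mul_le_mul (min_le_right _ _) (min_le_left _ _) hw' (by linarith)

lemma sigmaFinite_restrict_support_boundaryDist {γ : Measure (Icc (0 : ℝ) 1)}
    (h : Kc 0 γ (revM γ) ≠ ∞) : SigmaFinite (γ.restrict (Function.support boundaryDist)) := by
  refine sigmaFinite_restrict_support_of_lintegral_ne_top measurable_boundaryDist fun htop => h ?_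
  simpa [htop] using lintegral_boundaryDist_sq_le γ

lemma restrict_support_boundaryDist_eq_zero {γ : Measure (Icc (0 : ℝ) 1)}
    (h : Kc 0 γ (revM γ) = 0) : γ.restrict (Function.support boundaryDist) = 0 := by
  have hint : ∫⁻ x, boundaryDist x ∂γ = 0 := by
    simpa [h] using lintegral_boundaryDist_sq_le γ
  exact Measure.restrict_eq_zero.mpr
    (ae_iff.mp ((lintegral_eq_zero_iff measurable_boundaryDist).mp hint))

lemma integrand_eq_zero_of_boundaryDist_eq_zero {x y : Icc (0 : ℝ) 1}
    (h : boundaryDist x = 0 ∨ boundaryDist y = 0) : integrand c x y = 0 := by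
  have endpoint {z : Icc (0 : ℝ) 1} (hz : boundaryDist z = 0) : (z : ℝ) = 0 ∨ (z : ℝ) = 1 := by
    rw [boundaryDist, ENNReal.ofReal_eq_zero, min_le_iff] at hz
    exact hz.imp (le_antisymm · z.2.1) fun h => le_antisymm z.2.2 (by linarith)
  rw [integrand, ENNReal.ofReal_eq_zero]
  rcases h with h | h <;> rcases endpoint h with h | h <;> simp [h]

lemma eq_restrict_support_boundaryDist (c : ℝ) (α β : Measure (Icc (0 : ℝ) 1)) :
    Kc c α β = Kc c (α.restrict (Function.support boundaryDist))
      (β.restrict (Function.support boundaryDist)) := by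
  have inner (x : Icc (0 : ℝ) 1) : ∫⁻ y, integrand c x y ∂β =
      ∫⁻ y in Function.support boundaryDist, integrand c x y ∂β :=
    (setLIntegral_eq_of_support_subset (Function.support_subset_iff'.mpr fun _ hy =>
      integrand_eq_zero_of_boundaryDist_eq_zero (Or.inr (Function.notMem_support.mp hy)))).symm
  refine (lintegral_congr inner).trans
    (setLIntegral_eq_of_support_subset (Function.support_subset_iff'.mpr fun x hx => ?_)).symm
  exact (lintegral_congr fun _ => integrand_eq_zero_of_boundaryDist_eq_zero
    (Or.inl (Function.notMem_support.mp hx))).trans lintegral_zero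

lemma eq_zero_of_revM_eq_zero_left {γ : Measure (Icc (0 : ℝ) 1)} (h : Kc 0 γ (revM γ) = 0)
    (c : ℝ) (β : Measure (Icc (0 : ℝ) 1)) : Kc c γ β = 0 := by
  rw [eq_restrict_support_boundaryDist, restrict_support_boundaryDist_eq_zero h, Kc,
    lintegral_zero_measure]

lemma eq_zero_of_revM_eq_zero_right {γ : Measure (Icc (0 : ℝ) 1)} (h : Kc 0 γ (revM γ) = 0)
    (c : ℝ) (α : Measure (Icc (0 : ℝ) 1)) : Kc c α γ = 0 := by
  rw [eq_restrict_support_boundaryDist, restrict_support_boundaryDist_eq_zero h]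
  simp only [Kc, lintegral_zero_measure, lintegral_zero]

lemma mono {α α' β β' : Measure (Icc (0 : ℝ) 1)} (hα : α' ≤ α) (hβ : β' ≤ β) :
    Kc c α' β' ≤ Kc c α β :=
  lintegral_mono' hα fun _ => lintegral_mono' hβ le_rfl

end Kc

theorem stmt_6_general (c : ℝ) (hc1 : c < 1)
    (α β : Measure (Set.Icc (0 : ℝ) 1)) :
    Kc c α β ^ 2 ≤ Kc 0 α (revM α) * Kc 0 β (revM β) := by
  open Kc in
  rcases eq_or_ne (Kc 0 α (revM α)) 0 with hα0 | hα0
  · simp [eq_zero_of_revM_eq_zero_left hα0]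
  rcases eq_or_ne (Kc 0 β (revM β)) 0 with hβ0 | hβ0
  · simp [eq_zero_of_revM_eq_zero_right hβ0]
  rcases eq_or_ne (Kc 0 α (revM α)) ∞ with hα | hα
  · rw [hα, ENNReal.top_mul hβ0]
    exact le_top
  rcases eq_or_ne (Kc 0 β (revM β)) ∞ with hβ | hβ
  · rw [hβ, ENNReal.mul_top hα0]
    exact le_top
  have := sigmaFinite_restrict_support_boundaryDist hα
  have := sigmaFinite_restrict_support_boundaryDist hβ
  calc Kc c α β ^ 2 = Kc c (α.restrict (Function.support boundaryDist))
        (β.restrict (Function.support boundaryDist)) ^ 2 := by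
        rw [← eq_restrict_support_boundaryDist]
    _ ≤ _ := sq_le_of_sFinite hc1 _ _
    _ ≤ Kc 0 α (revM α) * Kc 0 β (revM β) := by
        gcongr <;> exact mono Measure.restrict_le_self (revM_mono Measure.restrict_le_self)

/-- Lemma 2.8: `K_c(α,β)² ≤ K(α,α^R)·K(β,β^R)` in `[0,∞]`. -/
theorem stmt_6 (c : ℝ) (hc0 : 0 ≤ c) (hc1 : c < 1)
    (α β : Measure (Set.Icc (0 : ℝ) 1)) :
    Kc c α β ^ 2 ≤ Kc 0 α (revM α) * Kc 0 β (revM β) :=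
  stmt_6_general c hc1 α β
end

section
/- Let A ⊆ {0,1}^n be a non-empty monotone set and let f, g : A → {0,1} be monotone increasing functions. Then E_{x∈A}[f(x)·g(x)] ≥ μ(A)·E_{x∈A}[f(x)]·E_{x∈A}[g(x)], where x is uniform on A. -/
open Finset

/-- FKG for 0/1-valued monotone functions on `A`:
`E_{x∈A}[f·g] ≥ μ(A)·E_{x∈A}[f]·E_{x∈A}[g]`. -/
theorem stmt_7 (n : ℕ) (A : Finset (Fin n → Bool)) (hA : A.Nonempty)
    (hmono : ∀ x ∈ A, ∀ y : Fin n → Bool, x ≤ y → y ∈ A)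
    (f g : (Fin n → Bool) → ℝ)
    (hf01 : ∀ x ∈ A, f x = 0 ∨ f x = 1) (hg01 : ∀ x ∈ A, g x = 0 ∨ g x = 1)
    (hf : MonoIncrOn A f) (hg : MonoIncrOn A g) :
    expA A (fun x => f x * g x) ≥ mu A * (expA A f * expA A g) := by
  classical
  set F : (Fin n → Bool) → ℝ := fun x => if x ∈ A then f x else 0 with hF
  set G : (Fin n → Bool) → ℝ := fun x => if x ∈ A then g x else 0 with hG
  have hf0 : ∀ x ∈ A, (0:ℝ) ≤ f x := fun x hx => by rcases hf01 x hx with h | h <;> simp [h]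
  have hg0 : ∀ x ∈ A, (0:ℝ) ≤ g x := fun x hx => by rcases hg01 x hx with h | h <;> simp [h]
  have hF0 : 0 ≤ F := fun x => by by_cases h : x ∈ A <;> simp [hF, h, hf0 x]
  have hG0 : 0 ≤ G := fun x => by by_cases h : x ∈ A <;> simp [hG, h, hg0 x]
  have hFmono : Monotone F := by
    intro x y hxy
    by_cases hx : x ∈ A
    · have hy := hmono x hx y hxy
      simpa [hF, hx, hy] using hf x hx y hy hxy
    · simpa [hF, hx] using hF0 y
  have hGmono : Monotone G := by
    intro x y hxy
    by_cases hx : x ∈ A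
    · have hy := hmono x hx y hxy
      simpa [hG, hx, hy] using hg x hx y hy hxy
    · simpa [hG, hx] using hG0 y
  have key := fkg F G (fun _ => (1:ℝ)) (fun _ => zero_le_one) hF0 hG0 hFmono hGmono
    (fun a b => by norm_num)
  simp only [one_mul] at key
  have hsumF : ∑ x, F x = ∑ x ∈ A, f x := by
    rw [← Finset.sum_subset (Finset.subset_univ A) (fun x _ hx => by simp [hF, hx])]
    exact Finset.sum_congr rfl fun x hx => by simp [hF, hx]
  have hsumG : ∑ x, G x = ∑ x ∈ A, g x := by
    rw [← Finset.sum_subset (Finset.subset_univ A) (fun x _ hx => by simp [hG, hx])]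
    exact Finset.sum_congr rfl fun x hx => by simp [hG, hx]
  have hsumFG : ∑ x, F x * G x = ∑ x ∈ A, f x * g x := by
    rw [← Finset.sum_subset (Finset.subset_univ A) (fun x _ hx => by simp [hF, hG, hx])]
    exact Finset.sum_congr rfl fun x hx => by simp [hF, hG, hx]
  have hcard : (∑ _x : Fin n → Bool, (1:ℝ)) = 2 ^ n := by
    simp [Finset.card_univ]
  rw [hsumF, hsumG, hsumFG, hcard] at key
  have hAcard : (0:ℝ) < A.card := by exact_mod_cast Finset.card_pos.mpr hA
  have h2 : (0:ℝ) < 2 ^ n := by positivity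
  rw [ge_iff_le, mu, expA, expA, expA]
  rw [div_mul_div_comm, div_mul_div_comm, div_le_div_iff₀ (by positivity) hAcard]
  nlinarith [key, hAcard, h2, mul_pos hAcard hAcard]
end

section
/- Let X be a real-valued random variable with E[X²] < ∞, and let α be the pushforward of the Lebesgue measure on ℝ under the map a ↦ P(X ≥ a). Then Var(X) = K(α, α^R). -/
/-!
Let `G a = P(X ≥ a)` and let `Y` be an independent copy of `X`, so that
`2 Var X = E (X - Y)²`. Since `(x - y)²` is the planar Lebesgue measure of the square
`Ι x y ×ˢ Ι x y`, Tonelli gives `2 Var X = ∫∫ P(a ∈ Ι X Y, b ∈ Ι X Y) da db`. For `a ≤ b` this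
event is `{X < a, Y ≥ b} ∪ {Y < a, X ≥ b}`, of probability
`2 (1 - G a) G b = 2 min (G a (1 - G b)) ((1 - G a) G b)`. Substituting `x = G a`, `y = G b`
turns the double integral into `K(α, α^R)`, as `1 - y` is the reversal of `y`.
-/

open MeasureTheory

/-- The pushforward of the Lebesgue measure on `ℝ` under `a ↦ P(X ≥ a)`, viewed as a
Borel measure on `[0,1]`. -/
noncomputable def pushCDF {Ω : Type*} [MeasurableSpace Ω] (μ : Measure Ω)
    [IsProbabilityMeasure μ] (X : Ω → ℝ) : Measure (Set.Icc (0 : ℝ) 1) :=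
  Measure.map (fun a : ℝ => (⟨(μ {ω | a ≤ X ω}).toReal,
    Set.mem_Icc.mpr ⟨ENNReal.toReal_nonneg, by
      simpa using ENNReal.toReal_mono (by simp) (prob_le_one (μ := μ))⟩⟩ :
    Set.Icc (0 : ℝ) 1)) volume

open Set ProbabilityTheory unitInterval
open scoped Interval

noncomputable def tailProb (ν : Measure ℝ) [IsZeroOrProbabilityMeasure ν] (a : ℝ) : I :=
  ⟨ν.real (Ici a), measureReal_nonneg, measureReal_le_one⟩

section TailProb

variable (ν : Measure ℝ)

lemma antitone_tailProb [IsZeroOrProbabilityMeasure ν] : Antitone (tailProb ν) := fun _ _ hab =>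
  measureReal_mono (Ici_subset_Ici.2 hab)

lemma measurable_tailProb [IsZeroOrProbabilityMeasure ν] : Measurable (tailProb ν) :=
  (antitone_tailProb ν).measurable

lemma measure_prod_setOf_mem_uIoc [IsProbabilityMeasure ν] (a b : ℝ) :
    (ν.prod ν) {q | a ∈ Ι q.1 q.2 ∧ b ∈ Ι q.1 q.2} =
      2 * ENNReal.ofReal (min (tailProb ν a * (1 - tailProb ν b))
        ((1 - tailProb ν a) * tailProb ν b)) := by
  wlog hab : a ≤ b generalizing a b
  · simpa only [and_comm, min_comm, mul_comm] using this b a (le_of_not_ge hab)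
  have hset : {q : ℝ × ℝ | a ∈ Ι q.1 q.2 ∧ b ∈ Ι q.1 q.2} =
      Iio a ×ˢ Ici b ∪ Ici b ×ˢ Iio a := by
    ext q
    simp only [mem_ofPred_eq, mem_uIoc, mem_union, mem_prod, mem_Iio, mem_Ici]
    grind
  have hdisj : Disjoint (Iio a ×ˢ Ici b) (Ici b ×ˢ Iio a) :=
    disjoint_prod.2 (.inl (disjoint_left.2 fun _ hxa hxb => (hxa.trans_le hab).not_ge hxb))
  have hmin : min (tailProb ν a * (1 - tailProb ν b) : ℝ) ((1 - tailProb ν a) * tailProb ν b)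
      = ν.real (Iio a) * ν.real (Ici b) := by
    have hba : (tailProb ν b : ℝ) ≤ tailProb ν a := antitone_tailProb ν hab
    rw [min_eq_right (by nlinarith [(tailProb ν a).2.2, (tailProb ν b).2.1]), ← compl_Ici,
      probReal_compl_eq_one_sub measurableSet_Ici]
    rfl
  rw [hset, measure_union hdisj (measurableSet_Ici.prod measurableSet_Iio), Measure.prod_prod,
    Measure.prod_prod, hmin, ENNReal.ofReal_mul measureReal_nonneg, ofReal_measureReal,
    ofReal_measureReal]
  ring

end TailProb

lemma volume_prod_uIoc_prod_uIoc (x y : ℝ) :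
    (volume.prod volume) (Ι x y ×ˢ Ι x y) = ENNReal.ofReal ((x - y) ^ 2) := by
  rw [Measure.prod_prod, Real.volume_uIoc, ← ENNReal.ofReal_mul (abs_nonneg _), ← sq, sq_abs,
    ← neg_sub, neg_sq]

lemma lintegral_sq_sub_prod_eq_two_mul_variance {ν : Measure ℝ} [IsProbabilityMeasure ν]
    (h : MemLp id 2 ν) :
    ∫⁻ q, ENNReal.ofReal ((q.1 - q.2) ^ 2) ∂(ν.prod ν) = 2 * ENNReal.ofReal Var[id; ν] := by
  have hint : Integrable (fun x : ℝ => x) ν := h.integrable one_le_two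
  have hmean : ∫ q, q.1 - q.2 ∂(ν.prod ν) = 0 := by
    rw [integral_sub (hint.comp_fst ν) (hint.comp_snd ν), integral_fun_fst (fun x : ℝ => x),
      integral_fun_snd (fun x : ℝ => x)]
    simp
  have hsub : (fun q : ℝ × ℝ => q.1 - q.2) = fun q => id q.1 + (-id) q.2 := by
    funext q; simp [sub_eq_add_neg]
  have hD : MemLp (fun q : ℝ × ℝ => id q.1 + (-id) q.2) 2 (ν.prod ν) :=
    (h.comp_fst ν).add (h.neg.comp_snd ν)
  calc ∫⁻ q, ENNReal.ofReal ((q.1 - q.2) ^ 2) ∂(ν.prod ν)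
      = eVar[fun q : ℝ × ℝ => q.1 - q.2; ν.prod ν] := by
        rw [evariance_eq_lintegral_ofReal, hmean]
        simp only [sub_zero]
    _ = ENNReal.ofReal (Var[id; ν] + Var[-id; ν]) := by
        rw [hsub, ← ofReal_variance hD, variance_add_prod h h.neg]
    _ = 2 * ENNReal.ofReal Var[id; ν] := by
        rw [variance_neg, ← two_mul, ENNReal.ofReal_mul zero_le_two, ENNReal.ofReal_ofNat]

lemma lintegral_min_tailProb_eq_variance {ν : Measure ℝ} [IsProbabilityMeasure ν]
    (h : MemLp id 2 ν) :
    ∫⁻ p, ENNReal.ofReal (min (tailProb ν p.1 * (1 - tailProb ν p.2))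
        ((1 - tailProb ν p.1) * tailProb ν p.2)) ∂(volume.prod volume) =
      ENNReal.ofReal Var[id; ν] := by
  set S : Set ((ℝ × ℝ) × ℝ × ℝ) := {z | z.1 ∈ Ι z.2.1 z.2.2 ×ˢ Ι z.2.1 z.2.2}
  have hS : MeasurableSet S := by
    simp only [S, mem_prod, uIoc, mem_Ioc, ofPred_and]
    measurability
  refine (ENNReal.mul_right_inj two_ne_zero ENNReal.ofNat_ne_top).1 ?_
  calc 2 * ∫⁻ p, ENNReal.ofReal (min (tailProb ν p.1 * (1 - tailProb ν p.2))
        ((1 - tailProb ν p.1) * tailProb ν p.2)) ∂(volume.prod volume)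
      = ∫⁻ p, (ν.prod ν) (Prod.mk p ⁻¹' S) ∂(volume.prod volume) := by
        rw [← lintegral_const_mul' _ _ ENNReal.ofNat_ne_top]
        exact lintegral_congr fun p => (measure_prod_setOf_mem_uIoc ν p.1 p.2).symm
    _ = ((volume.prod volume).prod (ν.prod ν)) S := (Measure.prod_apply hS).symm
    _ = ∫⁻ q, (volume.prod volume) ((fun p => (p, q)) ⁻¹' S) ∂(ν.prod ν) :=
        Measure.prod_apply_symm hS
    _ = ∫⁻ q, ENNReal.ofReal ((q.1 - q.2) ^ 2) ∂(ν.prod ν) :=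
        lintegral_congr fun q => volume_prod_uIoc_prod_uIoc q.1 q.2
    _ = 2 * ENNReal.ofReal Var[id; ν] := lintegral_sq_sub_prod_eq_two_mul_variance h

lemma Kc_zero_revM_eq_lintegral_prod (lam : Measure I) [SFinite lam] :
    Kc 0 lam (revM lam) = ∫⁻ z, ENNReal.ofReal (min (z.1 * (1 - z.2 : ℝ)) ((1 - z.1) * z.2))
      ∂(lam.prod lam) := by
  have hg : Measurable fun z : I × I =>
      ENNReal.ofReal (min (z.1 * (1 - z.2 : ℝ)) ((1 - z.1) * z.2)) := by
    fun_prop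
  rw [lintegral_prod _ hg.aemeasurable]
  simp only [Kc, sub_zero, Real.sqrt_one, one_mul, div_one]
  refine lintegral_congr fun x => ?_
  rw [show revM lam = lam.map σ from rfl, lintegral_map (by fun_prop) measurable_symm]
  simp [coe_symm_eq]

lemma pushCDF_eq_map {Ω : Type*} [MeasurableSpace Ω] (μ : Measure Ω) [IsProbabilityMeasure μ]
    {X : Ω → ℝ} (hX : AEMeasurable X μ) :
    pushCDF μ X = volume.map (tailProb (μ.map X)) := by
  unfold pushCDF
  congr 1
  funext a
  ext
  change (μ {ω | a ≤ X ω}).toReal = (μ.map X).real (Ici a)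
  rw [measureReal_def, Measure.map_apply_of_aemeasurable hX measurableSet_Ici]
  rfl

/-- Proposition 2.9: `Var(X) = K(α, α^R)` where `α` is the pushforward
of Lebesgue measure under `a ↦ P(X ≥ a)`. -/
theorem stmt_8 {Ω : Type*} [MeasurableSpace Ω] (μ : Measure Ω) [IsProbabilityMeasure μ]
    (X : Ω → ℝ) (hX : MemLp X 2 μ) :
    Kc 0 (pushCDF μ X) (revM (pushCDF μ X)) =
      ENNReal.ofReal ((∫ ω, X ω ^ 2 ∂μ) - (∫ ω, X ω ∂μ) ^ 2) := by
  have hXm : AEMeasurable X μ := hX.aemeasurable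
  have : IsProbabilityMeasure (μ.map X) := Measure.isProbabilityMeasure_map hXm
  have hν : MemLp id 2 (μ.map X) := (memLp_map_measure_iff aestronglyMeasurable_id hXm).2 hX
  have hG := measurable_tailProb (μ.map X)
  rw [pushCDF_eq_map μ hXm, Kc_zero_revM_eq_lintegral_prod, Measure.map_prod_map _ _ hG hG,
    lintegral_map (by fun_prop) (hG.prodMap hG)]
  simp only [Prod.map_fst, Prod.map_snd]
  rw [lintegral_min_tailProb_eq_variance hν, variance_id_map hXm, variance_eq_sub hX]
  simp
end

section
/- Let (X, Y) be a pair of real-valued random variables with E[X²] < ∞ and E[Y²] < ∞, let c ∈ [0,1), and suppose that for all a, b ∈ ℝ, P(X ≥ a and Y ≥ b) ≥ c·P(X ≥ a)·P(Y ≥ b). Let α be the pushforward of the Lebesgue measure on ℝ under a ↦ P(X ≥ a) and β the pushforward of the Lebesgue measure under b ↦ P(Y ≥ b). Then Cov(X,Y) ≥ −√(1−c)·K_c(α,β). -/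
open MeasureTheory

/-!
Hoeffding's identity writes the covariance as an integral of the tail covariance
`H(a,b) = P(X ≥ a, Y ≥ b) − P(X ≥ a) P(Y ≥ b)` over the plane. For an independent copy
`(X', Y')` of `(X, Y)` one has `2 Cov(X,Y) = E[(X − X')(Y − Y')]`; writing
`X − X' = ∫ (1{a ≤ X} − 1{a ≤ X'}) da`, likewise for `Y`, and applying Fubini gives `2 ∫∫ H`.
With `F(a) = P(X ≥ a)` and `G(b) = P(Y ≥ b)` the hypothesis gives `−H ≤ (1 − c) F G`, and
`P(A ∩ B) ≥ P(A) + P(B) − 1` gives `−H ≤ (1 − F)(1 − G)`. Integrating the minimum of the two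
bounds over the plane is, after the change of variables `a ↦ F(a)`, `b ↦ G(b)`, exactly
`√(1 − c) · K_c(α, β)`.
-/

open Set
open scoped ENNReal

section StepDiff

noncomputable def stepDiff (s t a : ℝ) : ℝ := (Iic s).indicator 1 a - (Iic t).indicator 1 a

lemma stepDiff_of_le {s t : ℝ} (h : t ≤ s) : stepDiff s t = (Ioc t s).indicator 1 := by
  rw [← Iic_sdiff_Iic, indicator_sdiff (Iic_subset_Iic.2 h)]; rfl

lemma stepDiff_swap (s t : ℝ) : stepDiff t s = -stepDiff s t := by
  ext a; simp [stepDiff]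

lemma integral_stepDiff (s t : ℝ) : ∫ a, stepDiff s t a = s - t := by
  rcases le_total t s with h | h
  · rw [stepDiff_of_le h, integral_indicator_one measurableSet_Ioc, Real.volume_real_Ioc_of_le h]
  · rw [stepDiff_swap, stepDiff_of_le h]
    simp only [Pi.neg_apply]
    rw [integral_neg, integral_indicator_one measurableSet_Ioc,
      Real.volume_real_Ioc_of_le h, neg_sub]

lemma enorm_stepDiff (s t a : ℝ) : ‖stepDiff s t a‖ₑ = (uIoc t s).indicator 1 a := by
  rcases le_total t s with h | h
  · rw [stepDiff_of_le h, uIoc_of_le h]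
    by_cases ha : a ∈ Ioc t s <;> simp [ha]
  · rw [stepDiff_swap, Pi.neg_apply, enorm_neg, stepDiff_of_le h, uIoc_of_ge h]
    by_cases ha : a ∈ Ioc s t <;> simp [ha]

lemma lintegral_enorm_stepDiff (s t : ℝ) : ∫⁻ a, ‖stepDiff s t a‖ₑ = ‖s - t‖ₑ := by
  simp_rw [enorm_stepDiff]
  rw [lintegral_indicator_one measurableSet_uIoc, Real.volume_uIoc, Real.enorm_eq_ofReal_abs]

lemma Measurable.stepDiff {α : Type*} [MeasurableSpace α] {f g h : α → ℝ} (hf : Measurable f)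
    (hg : Measurable g) (hh : Measurable h) : Measurable fun x => stepDiff (f x) (g x) (h x) := by
  unfold _root_.stepDiff
  simp only [indicator_apply, mem_Iic, Pi.one_apply]
  exact (Measurable.ite (measurableSet_le hh hf) measurable_const measurable_const).sub
    (Measurable.ite (measurableSet_le hh hg) measurable_const measurable_const)

end StepDiff

section Covariance

variable {Ω : Type*} [MeasurableSpace Ω] {μ : Measure Ω} [IsProbabilityMeasure μ]

lemma integral_prod_sub_mul_sub {f g : Ω → ℝ} (hf : MemLp f 2 μ) (hg : MemLp g 2 μ) :
    ∫ q, (f q.1 - f q.2) * (g q.1 - g q.2) ∂μ.prod μ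
      = 2 * (∫ ω, f ω * g ω ∂μ - (∫ ω, f ω ∂μ) * ∫ ω, g ω ∂μ) := by
  have h11 : Integrable (fun q : Ω × Ω => f q.1 * g q.1) (μ.prod μ) :=
    (hf.comp_fst μ).integrable_mul (hg.comp_fst μ)
  have h22 : Integrable (fun q : Ω × Ω => f q.2 * g q.2) (μ.prod μ) :=
    (hf.comp_snd μ).integrable_mul (hg.comp_snd μ)
  have h12 : Integrable (fun q : Ω × Ω => f q.1 * g q.2) (μ.prod μ) :=
    (hf.comp_fst μ).integrable_mul (hg.comp_snd μ)
  have h21 : Integrable (fun q : Ω × Ω => g q.1 * f q.2) (μ.prod μ) :=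
    (hg.comp_fst μ).integrable_mul (hf.comp_snd μ)
  calc ∫ q, (f q.1 - f q.2) * (g q.1 - g q.2) ∂μ.prod μ
      = ∫ q, ((f q.1 * g q.1 + f q.2 * g q.2) - (f q.1 * g q.2 + g q.1 * f q.2)) ∂μ.prod μ := by
        congr 1; ext q; ring
    _ = _ := by
        have hdiag : Integrable (fun q : Ω × Ω => f q.1 * g q.1 + f q.2 * g q.2) (μ.prod μ) :=
          h11.add h22
        have hcross : Integrable (fun q : Ω × Ω => f q.1 * g q.2 + g q.1 * f q.2) (μ.prod μ) :=
          h12.add h21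
        rw [integral_sub hdiag hcross, integral_add h11 h22, integral_add h12 h21,
          integral_fun_fst (fun ω => f ω * g ω), integral_fun_snd (fun ω => f ω * g ω),
          integral_prod_mul f g, integral_prod_mul g f]
        simp only [probReal_univ, one_smul]
        ring

noncomputable def tailCov (μ : Measure Ω) (X Y : Ω → ℝ) (a b : ℝ) : ℝ :=
  μ.real {ω | a ≤ X ω ∧ b ≤ Y ω} - μ.real {ω | a ≤ X ω} * μ.real {ω | b ≤ Y ω}

lemma integral_prod_stepDiff_mul_stepDiff {X Y : Ω → ℝ} (hX : Measurable X) (hY : Measurable Y)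
    (a b : ℝ) :
    ∫ q, stepDiff (X q.1) (X q.2) a * stepDiff (Y q.1) (Y q.2) b ∂μ.prod μ
      = 2 * tailCov μ X Y a b := by
  set A := {ω | a ≤ X ω}
  set B := {ω | b ≤ Y ω}
  have hA : MeasurableSet A := measurableSet_le measurable_const hX
  have hB : MeasurableSet B := measurableSet_le measurable_const hY
  have hstep : ∀ (Z : Ω → ℝ) (t : ℝ) (ω ω' : Ω),
      stepDiff (Z ω) (Z ω') t = {ω | t ≤ Z ω}.indicator 1 ω - {ω | t ≤ Z ω}.indicator 1 ω' := by
    intro Z t ω ω'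
    simp [stepDiff, indicator_apply]
  have hAL : MemLp (A.indicator (1 : Ω → ℝ)) 2 μ := (memLp_const 1).indicator hA
  have hBL : MemLp (B.indicator (1 : Ω → ℝ)) 2 μ := (memLp_const 1).indicator hB
  simp_rw [hstep]
  rw [integral_prod_sub_mul_sub hAL hBL]
  simp_rw [← Pi.mul_apply (A.indicator 1), ← inter_indicator_one]
  rw [integral_indicator_one (hA.inter hB), integral_indicator_one hA, integral_indicator_one hB]
  rfl

lemma integrable_stepDiff_mul_stepDiff {X Y : Ω → ℝ} (hXm : Measurable X) (hYm : Measurable Y)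
    (hX : MemLp X 2 μ) (hY : MemLp Y 2 μ) :
    Integrable (fun z : (Ω × Ω) × (ℝ × ℝ) =>
      stepDiff (X z.1.1) (X z.1.2) z.2.1 * stepDiff (Y z.1.1) (Y z.1.2) z.2.2)
      ((μ.prod μ).prod (volume.prod volume)) := by
  have hm : Measurable fun z : (Ω × Ω) × (ℝ × ℝ) =>
      stepDiff (X z.1.1) (X z.1.2) z.2.1 * stepDiff (Y z.1.1) (Y z.1.2) z.2.2 :=
    (Measurable.stepDiff (by fun_prop) (by fun_prop) (by fun_prop)).mul
      (Measurable.stepDiff (by fun_prop) (by fun_prop) (by fun_prop))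
  refine ⟨hm.aestronglyMeasurable, ?_⟩
  have hW : Integrable (fun q : Ω × Ω => (X q.1 - X q.2) * (Y q.1 - Y q.2)) (μ.prod μ) :=
    ((hX.comp_fst μ).sub (hX.comp_snd μ)).integrable_mul ((hY.comp_fst μ).sub (hY.comp_snd μ))
  calc ∫⁻ z, ‖stepDiff (X z.1.1) (X z.1.2) z.2.1 * stepDiff (Y z.1.1) (Y z.1.2) z.2.2‖ₑ
        ∂(μ.prod μ).prod (volume.prod volume)
      = ∫⁻ q, ‖(X q.1 - X q.2) * (Y q.1 - Y q.2)‖ₑ ∂μ.prod μ := by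
        rw [lintegral_prod _ hm.enorm.aemeasurable]
        refine lintegral_congr fun q => ?_
        simp only [enorm_mul]
        rw [lintegral_prod_mul
          (Measurable.stepDiff measurable_const measurable_const measurable_id').enorm.aemeasurable
          (Measurable.stepDiff measurable_const measurable_const measurable_id').enorm.aemeasurable,
          lintegral_enorm_stepDiff, lintegral_enorm_stepDiff]
    _ < ∞ := hW.2

variable {X Y : Ω → ℝ}

lemma integrable_tailCov (hXm : Measurable X) (hYm : Measurable Y)
    (hX : MemLp X 2 μ) (hY : MemLp Y 2 μ) :
    Integrable (fun p : ℝ × ℝ => tailCov μ X Y p.1 p.2) (volume.prod volume) := by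
  refine ((integrable_stepDiff_mul_stepDiff hXm hYm hX hY).swap.integral_prod_left.div_const
    2).congr (ae_of_all _ fun p => ?_)
  simp only [Function.comp_apply, Prod.fst_swap, Prod.snd_swap,
    integral_prod_stepDiff_mul_stepDiff hXm hYm]
  ring

theorem integral_tailCov (hXm : Measurable X) (hYm : Measurable Y)
    (hX : MemLp X 2 μ) (hY : MemLp Y 2 μ) :
    ∫ p : ℝ × ℝ, tailCov μ X Y p.1 p.2 ∂(volume.prod volume)
      = ∫ ω, X ω * Y ω ∂μ - (∫ ω, X ω ∂μ) * ∫ ω, Y ω ∂μ := by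
  have hswap := integral_integral_swap (f := fun (q : Ω × Ω) (p : ℝ × ℝ) =>
    stepDiff (X q.1) (X q.2) p.1 * stepDiff (Y q.1) (Y q.2) p.2)
    (integrable_stepDiff_mul_stepDiff hXm hYm hX hY)
  simp only [integral_prod_stepDiff_mul_stepDiff hXm hYm, integral_prod_mul (μ := volume),
    integral_stepDiff, integral_const_mul] at hswap
  rw [integral_prod_sub_mul_sub hX hY] at hswap
  linarith

lemma neg_tailCov_le (hY : Measurable Y) {c a b : ℝ}
    (hcond : c * μ.real {ω | a ≤ X ω} * μ.real {ω | b ≤ Y ω} ≤ μ.real {ω | a ≤ X ω ∧ b ≤ Y ω}) :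
    -tailCov μ X Y a b ≤ min ((1 - c) * (μ.real {ω | a ≤ X ω} * μ.real {ω | b ≤ Y ω}))
      ((1 - μ.real {ω | a ≤ X ω}) * (1 - μ.real {ω | b ≤ Y ω})) := by
  have hunion : μ.real ({ω | a ≤ X ω} ∪ {ω | b ≤ Y ω}) + μ.real {ω | a ≤ X ω ∧ b ≤ Y ω}
      = μ.real {ω | a ≤ X ω} + μ.real {ω | b ≤ Y ω} :=
    measureReal_union_add_inter (measurableSet_le measurable_const hY)
  have hle : μ.real ({ω | a ≤ X ω} ∪ {ω | b ≤ Y ω}) ≤ 1 := measureReal_le_one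
  rw [tailCov]
  exact le_min (by linarith) (by linarith)

lemma antitone_measureReal_setOf_le (μ : Measure Ω) [IsFiniteMeasure μ] (X : Ω → ℝ) :
    Antitone fun a => μ.real {ω | a ≤ X ω} :=
  fun _ _ h => measureReal_mono fun _ hω => h.trans hω

lemma lintegral_pushCDF {f : ℝ → ℝ≥0∞} (hf : Measurable f) :
    ∫⁻ x, f x.1 ∂pushCDF μ X = ∫⁻ a, f (μ.real {ω | a ≤ X ω}) := by
  rw [pushCDF]
  exact lintegral_map (hf.comp measurable_subtype_coe)
    (antitone_measureReal_setOf_le μ X).measurable.subtype_mk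

lemma sqrt_mul_min_eq {c : ℝ} (hc : c < 1) (x y : ℝ) :
    √(1 - c) * min (√(1 - c) * (x * y)) ((1 - x) * (1 - y) / √(1 - c))
      = min ((1 - c) * (x * y)) ((1 - x) * (1 - y)) := by
  have hr : 0 < √(1 - c) := Real.sqrt_pos.2 (by linarith)
  rw [mul_min_of_nonneg _ _ hr.le, ← mul_assoc, Real.mul_self_sqrt (by linarith),
    mul_div_cancel₀ _ hr.ne']

lemma ofReal_sqrt_mul_Kc_pushCDF {c : ℝ} (hc : c < 1) :
    ENNReal.ofReal √(1 - c) * Kc c (pushCDF μ X) (pushCDF μ Y)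
      = ∫⁻ p : ℝ × ℝ, ENNReal.ofReal
          (min ((1 - c) * (μ.real {ω | p.1 ≤ X ω} * μ.real {ω | p.2 ≤ Y ω}))
            ((1 - μ.real {ω | p.1 ≤ X ω}) * (1 - μ.real {ω | p.2 ≤ Y ω}))) ∂volume.prod volume := by
  set F := fun a => μ.real {ω | a ≤ X ω}
  set G := fun b => μ.real {ω | b ≤ Y ω}
  have hF : Measurable F := (antitone_measureReal_setOf_le μ X).measurable
  have hG : Measurable G := (antitone_measureReal_setOf_le μ Y).measurable
  set k : ℝ → ℝ → ℝ := fun x y => min (√(1 - c) * (x * y)) ((1 - x) * (1 - y) / √(1 - c))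
  have hk : Measurable fun z : ℝ × ℝ => ENNReal.ofReal (k z.1 z.2) := by fun_prop
  have hKc : Kc c (pushCDF μ X) (pushCDF μ Y) = ∫⁻ a, ∫⁻ b, ENNReal.ofReal (k (F a) (G b)) := by
    have hinner : ∀ x : Icc (0 : ℝ) 1,
        ∫⁻ y, ENNReal.ofReal (k x.1 y.1) ∂pushCDF μ Y = ∫⁻ b, ENNReal.ofReal (k x.1 (G b)) :=
      fun x => lintegral_pushCDF (f := fun y => ENNReal.ofReal (k x.1 y)) (by fun_prop)
    change ∫⁻ x, ∫⁻ y, ENNReal.ofReal (k x.1 y.1) ∂pushCDF μ Y ∂pushCDF μ X = _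
    simp_rw [hinner]
    exact lintegral_pushCDF (f := fun x => ∫⁻ b, ENNReal.ofReal (k x (G b)))
      (Measurable.lintegral_prod_right' (f := fun z => ENNReal.ofReal (k z.1 (G z.2)))
        (hk.comp (measurable_fst.prodMk (hG.comp measurable_snd))))
  have hbound : Measurable fun p : ℝ × ℝ =>
      ENNReal.ofReal (min ((1 - c) * (F p.1 * G p.2)) ((1 - F p.1) * (1 - G p.2))) := by
    fun_prop
  rw [hKc, lintegral_prod _ hbound.aemeasurable, ← lintegral_const_mul' _ _ ENNReal.ofReal_ne_top]
  refine lintegral_congr fun a => ?_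
  rw [← lintegral_const_mul' _ _ ENNReal.ofReal_ne_top]
  refine lintegral_congr fun b => ?_
  rw [← ENNReal.ofReal_mul (Real.sqrt_nonneg _), sqrt_mul_min_eq hc]

lemma ofReal_integral_le_lintegral_ofReal {α : Type*} [MeasurableSpace α] {ν : Measure α}
    {f : α → ℝ} (hf : Integrable f ν) :
    ENNReal.ofReal (∫ x, f x ∂ν) ≤ ∫⁻ x, ENNReal.ofReal (f x) ∂ν := by
  rw [integral_eq_lintegral_pos_part_sub_lintegral_neg_part hf]
  refine (ENNReal.ofReal_le_ofReal (sub_le_self _ ENNReal.toReal_nonneg)).trans ?_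
  exact ENNReal.ofReal_toReal_le

theorem ofReal_neg_covariance_le (hXm : Measurable X) (hYm : Measurable Y)
    (hX : MemLp X 2 μ) (hY : MemLp Y 2 μ) {c : ℝ} (hc : c < 1)
    (hcond : ∀ a b : ℝ, c * μ.real {ω | a ≤ X ω} * μ.real {ω | b ≤ Y ω}
      ≤ μ.real {ω | a ≤ X ω ∧ b ≤ Y ω}) :
    ENNReal.ofReal (-(∫ ω, X ω * Y ω ∂μ - (∫ ω, X ω ∂μ) * ∫ ω, Y ω ∂μ))
      ≤ ENNReal.ofReal √(1 - c) * Kc c (pushCDF μ X) (pushCDF μ Y) := by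
  rw [← integral_tailCov hXm hYm hX hY, ← integral_neg, ofReal_sqrt_mul_Kc_pushCDF hc]
  exact (ofReal_integral_le_lintegral_ofReal (integrable_tailCov hXm hYm hX hY).neg).trans
    (lintegral_mono fun p => ENNReal.ofReal_le_ofReal (neg_tailCov_le hYm (hcond p.1 p.2)))

end Covariance

section AEModification

variable {Ω : Type*} [MeasurableSpace Ω] {μ : Measure Ω}

lemma ae_eq_setOf_le {X X' : Ω → ℝ} (h : X =ᵐ[μ] X') (a : ℝ) :
    {ω | a ≤ X ω} =ᵐ[μ] {ω | a ≤ X' ω} :=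
  h.fun_comp (a ≤ ·)

lemma pushCDF_congr_ae [IsProbabilityMeasure μ] {X X' : Ω → ℝ} (h : X =ᵐ[μ] X') :
    pushCDF μ X = pushCDF μ X' := by
  unfold pushCDF
  congr with a
  exact congrArg ENNReal.toReal (measure_congr (ae_eq_setOf_le h a))

end AEModification

theorem stmt_9_general {Ω : Type*} [MeasurableSpace Ω] (μ : Measure Ω) [IsProbabilityMeasure μ]
    (X Y : Ω → ℝ) (hX : MemLp X 2 μ) (hY : MemLp Y 2 μ)
    (c : ℝ) (hc1 : c < 1)
    (hcond : ∀ a b : ℝ,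
      c * (μ {ω | a ≤ X ω}).toReal * (μ {ω | b ≤ Y ω}).toReal ≤
        (μ {ω | a ≤ X ω ∧ b ≤ Y ω}).toReal) :
    ENNReal.ofReal (-((∫ ω, X ω * Y ω ∂μ) - (∫ ω, X ω ∂μ) * (∫ ω, Y ω ∂μ))) ≤
      ENNReal.ofReal (Real.sqrt (1 - c)) * Kc c (pushCDF μ X) (pushCDF μ Y) := by
  obtain ⟨X', hX'm, hXX'⟩ := hX.aestronglyMeasurable.aemeasurable
  obtain ⟨Y', hY'm, hYY'⟩ := hY.aestronglyMeasurable.aemeasurable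
  have hcond' (a b : ℝ) : c * μ.real {ω | a ≤ X' ω} * μ.real {ω | b ≤ Y' ω}
      ≤ μ.real {ω | a ≤ X' ω ∧ b ≤ Y' ω} := by
    have hA := measure_congr (ae_eq_setOf_le hXX' a)
    have hB := measure_congr (ae_eq_setOf_le hYY' b)
    have hAB : μ {ω | a ≤ X ω ∧ b ≤ Y ω} = μ {ω | a ≤ X' ω ∧ b ≤ Y' ω} :=
      measure_congr ((ae_eq_setOf_le hXX' a).inter (ae_eq_setOf_le hYY' b))
    simpa only [measureReal_def, hA, hB, hAB] using hcond a b
  rw [integral_congr_ae (f := fun ω => X ω * Y ω) (hXX'.mul hYY'), integral_congr_ae hXX',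
    integral_congr_ae hYY', pushCDF_congr_ae hXX', pushCDF_congr_ae hYY']
  exact ofReal_neg_covariance_le hX'm hY'm (hX.ae_eq hXX') (hY.ae_eq hYY') hc1 hcond'

/-- Proposition 2.10: under the FKG-type condition,
`Cov(X,Y) ≥ −√(1−c)·K_c(α,β)`; stated in `[0,∞]` as
`ofReal(−Cov(X,Y)) ≤ ofReal(√(1−c))·K_c(α,β)`. -/
theorem stmt_9 {Ω : Type*} [MeasurableSpace Ω] (μ : Measure Ω) [IsProbabilityMeasure μ]
    (X Y : Ω → ℝ) (hX : MemLp X 2 μ) (hY : MemLp Y 2 μ)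
    (c : ℝ) (hc0 : 0 ≤ c) (hc1 : c < 1)
    (hcond : ∀ a b : ℝ,
      c * (μ {ω | a ≤ X ω}).toReal * (μ {ω | b ≤ Y ω}).toReal ≤
        (μ {ω | a ≤ X ω ∧ b ≤ Y ω}).toReal) :
    ENNReal.ofReal (-((∫ ω, X ω * Y ω ∂μ) - (∫ ω, X ω ∂μ) * (∫ ω, Y ω ∂μ))) ≤
      ENNReal.ofReal (Real.sqrt (1 - c)) * Kc c (pushCDF μ X) (pushCDF μ Y) :=
  stmt_9_general μ X Y hX hY c hc1 hcond
end

section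
/- Let A ⊆ {0,1}^n be a non-empty monotone set. Then for every function f : A → ℝ, μ(A)·𝔈_A(f) = 𝔈⁻(T[f]) + 𝔈⁻(T[−f]). -/
open Finset

lemma minsq_aux (e : ℝ) : (min 0 e)^2 + (min 0 (-e))^2 = e^2 := by
  rcases le_total e 0 with h | h
  · rw [min_eq_right h, min_eq_left (by linarith)]; ring
  · rw [min_eq_left h, min_eq_right (by linarith)]; ring

/-- `μ(A)·𝔈_A(f) = 𝔈⁻(T[f]) + 𝔈⁻(T[−f])` for non-empty monotone `A`. -/
theorem stmt_10 (n : ℕ) (A : Finset (Fin n → Bool)) (hA : A.Nonempty)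
    (hmono : ∀ x ∈ A, ∀ y : Fin n → Bool, x ≤ y → y ∈ A)
    (f : (Fin n → Bool) → ℝ) :
    mu A * dirA A f = energyMinus (extT A hA f) + energyMinus (extT A hA (fun x => -f x)) := by
  have hc : (A.card : ℝ) ≠ 0 := by
    exact_mod_cast Finset.card_ne_zero.mpr hA
  have pairclaim : ∀ u v : Fin n → Bool, u ≤ v →
      (min 0 (extT A hA f v - extT A hA f u))^2
        + (min 0 (extT A hA (fun x => -f x) v - extT A hA (fun x => -f x) u))^2
      = if u ∈ A ∧ v ∈ A then (f v - f u)^2 else 0 := by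
    intro u v huv
    by_cases h0 : u ∈ A
    · have h1 : v ∈ A := hmono _ h0 _ huv
      simp only [extT, if_pos h0, if_pos h1, h0, h1, and_self, if_true]
      have he : -f v - -f u = -(f v - f u) := by ring
      rw [he, minsq_aux]
    · by_cases h1 : v ∈ A
      · simp only [extT, if_pos h1, if_neg h0, h0, false_and, if_false]
        have e1 : A.inf' hA f ≤ f v := Finset.inf'_le _ h1
        have e2 : A.inf' hA (fun x => -f x) ≤ -f v := Finset.inf'_le _ h1
        rw [min_eq_left (by linarith), min_eq_left (by linarith)]
        norm_num
      · simp only [extT, if_neg h0, if_neg h1, h0, false_and, if_false]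
        simp
  have key : ∀ (x : Fin n → Bool) (i : Fin n),
      (if x ∈ A then (f x - f (bflip x i))^2 * (if bflip x i ∈ A then (1:ℝ) else 0) else 0)
      = (min 0 (extT A hA f (bset x i true) - extT A hA f (bset x i false)))^2
        + (min 0 (extT A hA (fun x => -f x) (bset x i true)
            - extT A hA (fun x => -f x) (bset x i false)))^2 := by
    intro x i
    have hle : bset x i false ≤ bset x i true := by
      intro j
      simp only [bset, Function.update_apply]
      split
      · simp
      · exact le_refl _
    rw [pairclaim _ _ hle]
    cases hb : x i
    · have hx : bset x i false = x := by
        rw [← hb]; exact Function.update_eq_self i x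
      have hfl : bset x i true = bflip x i := by
        unfold bflip; rw [hb]; rfl
      rw [hx, hfl]
      by_cases h1 : x ∈ A <;> by_cases h2 : bflip x i ∈ A <;>
        simp [h1, h2] <;> ring
    · have hx : bset x i true = x := by
        rw [← hb]; exact Function.update_eq_self i x
      have hfl : bset x i false = bflip x i := by
        unfold bflip; rw [hb]; rfl
      rw [hx, hfl]
      by_cases h1 : x ∈ A <;> by_cases h2 : bflip x i ∈ A <;>
        simp [h1, h2] <;> ring
  have hsum : (∑ x ∈ A, ∑ i, (f x - f (bflip x i))^2
        * (if bflip x i ∈ A then (1:ℝ) else 0))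
      = (∑ x, ∑ i, (min 0 (extT A hA f (bset x i true) - extT A hA f (bset x i false)))^2)
        + ∑ x, ∑ i, (min 0 (extT A hA (fun x => -f x) (bset x i true)
            - extT A hA (fun x => -f x) (bset x i false)))^2 := by
    rw [← Finset.sum_add_distrib]
    have : ∀ x : Fin n → Bool, (∑ i, (min 0 (extT A hA f (bset x i true)
            - extT A hA f (bset x i false)))^2)
          + ∑ i, (min 0 (extT A hA (fun x => -f x) (bset x i true)
            - extT A hA (fun x => -f x) (bset x i false)))^2
        = if x ∈ A then (∑ i, (f x - f (bflip x i))^2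
            * (if bflip x i ∈ A then (1:ℝ) else 0)) else 0 := by
      intro x
      rw [← Finset.sum_add_distrib]
      rw [show ((∑ i, ((min 0 (extT A hA f (bset x i true) - extT A hA f (bset x i false)))^2
        + (min 0 (extT A hA (fun x => -f x) (bset x i true)
            - extT A hA (fun x => -f x) (bset x i false)))^2)) : ℝ)
        = ∑ i, (if x ∈ A then (f x - f (bflip x i))^2
            * (if bflip x i ∈ A then (1:ℝ) else 0) else 0) from
        Finset.sum_congr rfl (fun i _ => (key x i).symm)]
      split <;> simp
    rw [Finset.sum_congr rfl (fun x _ => this x)]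
    rw [Finset.sum_ite_mem, Finset.univ_inter]
  unfold mu dirA expA energyMinus expC
  rw [hsum]
  field_simp
end

section
/- Let A ⊆ {0,1}^n be a non-empty monotone set. Then for every function f : A → ℝ and every monotone increasing function g : A → ℝ, μ(A)^{−1/2}·dist₂^mono(T[f]) ≤ ‖f − g‖₂, where ‖·‖₂ is the L² norm with respect to the uniform measure on A. -/
open Finset

/-!
Let `c = min_A f` and extend `g` by `G = max g c` on `A` and `G = c` off `A`. Since `A` is an
up-set, `G` is monotone on the whole cube. Off `A` both `T[f]` and `G` equal `c`, and on `A`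
raising `g` to the level `c ≤ f` only brings it closer to `f`; hence
`‖T[f] − G‖²_{cube} ≤ μ(A) ‖f − g‖²_A`.
-/

def clipExtend {α : Type*} [DecidableEq α] (A : Finset α) (c : ℝ) (g : α → ℝ) : α → ℝ :=
  fun x => if x ∈ A then max (g x) c else c

theorem monotone_clipExtend {α : Type*} [Preorder α] [DecidableEq α] {A : Finset α}
    (hA : ∀ x ∈ A, ∀ y, x ≤ y → y ∈ A) (c : ℝ) {g : α → ℝ} (hg : ∀ x ∈ A, ∀ y ∈ A, x ≤ y → g x ≤ g y) :
    Monotone (clipExtend A c g) := by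
  intro x y hxy
  unfold clipExtend
  by_cases hx : x ∈ A
  · have hy := hA x hx y hxy
    rw [if_pos hx, if_pos hy]
    exact max_le_max (hg x hx y hy hxy) le_rfl
  · rw [if_neg hx]
    split_ifs
    exacts [le_max_right _ _, le_rfl]

theorem sq_sub_max_le {a b c : ℝ} (hca : c ≤ a) : (a - max b c) ^ 2 ≤ (a - b) ^ 2 := by
  rcases le_total c b with h | h
  · rw [max_eq_left h]
  · rw [max_eq_right h]
    exact pow_le_pow_left₀ (by linarith) (by linarith) 2

theorem expC_eq_sum_div_of_eq_zero_off {n : ℕ} (A : Finset (Fin n → Bool)) {h : (Fin n → Bool) → ℝ}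
    (hA : ∀ x ∉ A, h x = 0) : expC h = (∑ x ∈ A, h x) / 2 ^ n := by
  unfold expC
  rw [Finset.sum_subset (Finset.subset_univ A) fun x _ hx => hA x hx]

theorem mu_mul_expA {n : ℕ} {A : Finset (Fin n → Bool)} (hA : A.Nonempty)
    (h : (Fin n → Bool) → ℝ) : mu A * expA A h = (∑ x ∈ A, h x) / 2 ^ n := by
  have hcard : (A.card : ℝ) ≠ 0 := by exact_mod_cast hA.card_pos.ne'
  unfold mu expA
  field_simp

theorem mu_pos {n : ℕ} {A : Finset (Fin n → Bool)} (hA : A.Nonempty) : 0 < mu A :=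
  div_pos (by exact_mod_cast hA.card_pos) (by positivity)

theorem dist2mono_le {n : ℕ} (h G : (Fin n → Bool) → ℝ) (hG : Monotone G) :
    dist2mono h ≤ Real.sqrt (expC fun x => (h x - G x) ^ 2) :=
  ciInf_le ⟨0, by rintro _ ⟨_, rfl⟩; exact Real.sqrt_nonneg _⟩ (⟨G, hG⟩ : {G // Monotone G})

theorem expC_sq_sub_clipExtend_le {n : ℕ} {A : Finset (Fin n → Bool)} (hA : A.Nonempty)
    (f g : (Fin n → Bool) → ℝ) :
    expC (fun x => (extT A hA f x - clipExtend A (A.inf' hA f) g x) ^ 2)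
      ≤ mu A * expA A (fun x => (f x - g x) ^ 2) := by
  rw [mu_mul_expA hA, expC_eq_sum_div_of_eq_zero_off A fun x hx => by
    simp [extT, clipExtend, hx]]
  refine div_le_div_of_nonneg_right (sum_le_sum fun x hx => ?_) (by positivity)
  simp only [extT, clipExtend, if_pos hx]
  exact sq_sub_max_le (inf'_le f hx)

/-- for every monotone increasing `g : A → ℝ`,
`μ(A)^{−1/2}·dist₂^mono(T[f]) ≤ ‖f − g‖₂`. -/
theorem stmt_12 (n : ℕ) (A : Finset (Fin n → Bool)) (hA : A.Nonempty)
    (hmono : ∀ x ∈ A, ∀ y : Fin n → Bool, x ≤ y → y ∈ A)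
    (f g : (Fin n → Bool) → ℝ) (hg : MonoIncrOn A g) :
    (Real.sqrt (mu A))⁻¹ * dist2mono (extT A hA f) ≤
      Real.sqrt (expA A (fun x => (f x - g x) ^ 2)) := by
  have hmu := mu_pos hA
  rw [inv_mul_le_iff₀ (Real.sqrt_pos.mpr hmu), ← Real.sqrt_mul hmu.le]
  calc dist2mono (extT A hA f)
      ≤ Real.sqrt (expC fun x => (extT A hA f x - clipExtend A (A.inf' hA f) g x) ^ 2) :=
        dist2mono_le _ _ (monotone_clipExtend hmono _ hg)
    _ ≤ Real.sqrt (mu A * expA A fun x => (f x - g x) ^ 2) :=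
        Real.sqrt_le_sqrt (expC_sq_sub_clipExtend_le hA f g)
end

section
/- Let A be a non-empty finite set and let f, g, h : A → ℝ be non-constant functions. Then max{0, ρ(f,g)}² + max{0, ρ(f,h)}² ≤ 1 + max{0, ρ(g,h)}. -/
/-- Expectation of `f` under the uniform measure on the finite type `α`. -/
noncomputable def expF {α : Type*} [Fintype α] (f : α → ℝ) : ℝ :=
  (∑ x, f x) / (Fintype.card α : ℝ)

/-- Variance of `f` under the uniform measure on `α`. -/
noncomputable def varF {α : Type*} [Fintype α] (f : α → ℝ) : ℝ :=
  expF (fun x => (f x - expF f) ^ 2)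

/-- Covariance of `f` and `g` under the uniform measure on `α`. -/
noncomputable def covF {α : Type*} [Fintype α] (f g : α → ℝ) : ℝ :=
  expF (fun x => (f x - expF f) * (g x - expF g))

/-- The correlation ratio `ρ(f,g)`. -/
noncomputable def rho {α : Type*} [Fintype α] (f g : α → ℝ) : ℝ :=
  covF f g / Real.sqrt (varF f * varF g)

section Aux

open Finset

variable {α : Type*} [Fintype α] [Nonempty α]

lemma varF_def (f : α → ℝ) :
    varF f = (∑ x, (f x - expF f) ^ 2) / (Fintype.card α : ℝ) := rfl

lemma covF_def (f g : α → ℝ) :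
    covF f g = (∑ x, (f x - expF f) * (g x - expF g)) / (Fintype.card α : ℝ) := rfl

lemma cardR_pos : (0 : ℝ) < (Fintype.card α : ℝ) := by
  exact_mod_cast Fintype.card_pos

lemma varF_pos {f : α → ℝ} (hf : ∃ x y, f x ≠ f y) : 0 < varF f := by
  obtain ⟨x, y, hxy⟩ := hf
  have hne : f x ≠ expF f ∨ f y ≠ expF f := by
    by_contra hc
    push_neg at hc
    exact hxy (hc.1.trans hc.2.symm)
  have hpos : 0 < ∑ z, (f z - expF f) ^ 2 := by
    rcases hne with hne | hne
    · exact Finset.sum_pos' (fun i _ => sq_nonneg _)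
        ⟨x, Finset.mem_univ x, by have := sub_ne_zero.mpr hne; positivity⟩
    · exact Finset.sum_pos' (fun i _ => sq_nonneg _)
        ⟨y, Finset.mem_univ y, by have := sub_ne_zero.mpr hne; positivity⟩
  rw [varF_def]
  exact div_pos hpos cardR_pos

lemma varF_nonneg (f : α → ℝ) : 0 ≤ varF f := by
  rw [varF_def]
  positivity

/-- Cauchy–Schwarz for covariance. -/
lemma covF_sq_le (f g : α → ℝ) : covF f g ^ 2 ≤ varF f * varF g := by
  have cs := Finset.sum_mul_sq_le_sq_mul_sq Finset.univ
    (fun x => f x - expF f) (fun x => g x - expF g)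
  rw [covF_def, varF_def, varF_def, div_pow, div_mul_div_comm, ← pow_two]
  exact div_le_div_of_nonneg_right cs (by positivity) |>.trans_eq rfl

lemma rho_sq_le_one {f g : α → ℝ} (hf : 0 < varF f) (hg : 0 < varF g) :
    rho f g ^ 2 ≤ 1 := by
  rw [rho, div_pow, Real.sq_sqrt (by positivity : (0:ℝ) ≤ varF f * varF g)]
  exact div_le_one_of_le₀ (covF_sq_le f g) (by positivity)

/-- Gram determinant style inequality on sums. -/
lemma gram_sum (u v w : α → ℝ) (hu : 0 < ∑ x, u x ^ 2) :
    ((∑ x, u x ^ 2) * (∑ x, v x * w x) - (∑ x, u x * v x) * (∑ x, u x * w x)) ^ 2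
      ≤ ((∑ x, u x ^ 2) * (∑ x, v x ^ 2) - (∑ x, u x * v x) ^ 2)
        * ((∑ x, u x ^ 2) * (∑ x, w x ^ 2) - (∑ x, u x * w x) ^ 2) := by
  set A := ∑ x, u x ^ 2 with hA
  set B := ∑ x, u x * v x with hB
  set C := ∑ x, u x * w x with hC
  have cs := Finset.sum_mul_sq_le_sq_mul_sq Finset.univ
    (fun x => A * v x - B * u x) (fun x => A * w x - C * u x)
  have hpq : ∑ x, (A * v x - B * u x) * (A * w x - C * u x)
      = A * (A * (∑ x, v x * w x) - B * C) := by
    have : ∀ x ∈ Finset.univ, (A * v x - B * u x) * (A * w x - C * u x)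
        = A ^ 2 * (v x * w x) - (A * C) * (u x * v x) - (A * B) * (u x * w x)
          + (B * C) * (u x ^ 2) := fun x _ => by ring
    rw [Finset.sum_congr rfl this, Finset.sum_add_distrib, Finset.sum_sub_distrib,
      Finset.sum_sub_distrib, ← Finset.mul_sum, ← Finset.mul_sum, ← Finset.mul_sum,
      ← Finset.mul_sum, ← hA, ← hB, ← hC]
    ring
  have hp2 : ∑ x, (A * v x - B * u x) ^ 2
      = A * (A * (∑ x, v x ^ 2) - B ^ 2) := by
    have : ∀ x ∈ Finset.univ, (A * v x - B * u x) ^ 2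
        = A ^ 2 * (v x ^ 2) - (2 * A * B) * (u x * v x) + B ^ 2 * (u x ^ 2) :=
      fun x _ => by ring
    rw [Finset.sum_congr rfl this, Finset.sum_add_distrib, Finset.sum_sub_distrib,
      ← Finset.mul_sum, ← Finset.mul_sum, ← Finset.mul_sum, ← hA, ← hB]
    ring
  have hq2 : ∑ x, (A * w x - C * u x) ^ 2
      = A * (A * (∑ x, w x ^ 2) - C ^ 2) := by
    have : ∀ x ∈ Finset.univ, (A * w x - C * u x) ^ 2
        = A ^ 2 * (w x ^ 2) - (2 * A * C) * (u x * w x) + C ^ 2 * (u x ^ 2) :=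
      fun x _ => by ring
    rw [Finset.sum_congr rfl this, Finset.sum_add_distrib, Finset.sum_sub_distrib,
      ← Finset.mul_sum, ← Finset.mul_sum, ← Finset.mul_sum, ← hA, ← hC]
    ring
  rw [hpq, hp2, hq2] at cs
  have hA2 : 0 < A ^ 2 := by positivity
  nlinarith [cs, hA2]

/-- Gram inequality in covariance form. -/
lemma gram_cov {f : α → ℝ} (g h : α → ℝ) (hf : 0 < varF f) :
    (varF f * covF g h - covF f g * covF f h) ^ 2
      ≤ (varF f * varF g - covF f g ^ 2) * (varF f * varF h - covF f h ^ 2) := by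
  set N : ℝ := (Fintype.card α : ℝ) with hNdef
  have hN : 0 < N := cardR_pos
  have hu : 0 < ∑ x, (f x - expF f) ^ 2 := by
    have := hf; rw [varF_def] at this
    exact (div_pos_iff.mp this).resolve_right (fun hc => absurd hc.2 (not_lt.mpr hN.le)) |>.1
  have key := gram_sum (fun x => f x - expF f) (fun x => g x - expF g)
    (fun x => h x - expF h) hu
  have e1 : (∑ x, (f x - expF f) ^ 2) = N * varF f := by
    rw [varF_def, mul_div_cancel₀ _ hN.ne']
  have e2 : (∑ x, (g x - expF g) ^ 2) = N * varF g := by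
    rw [varF_def, mul_div_cancel₀ _ hN.ne']
  have e3 : (∑ x, (h x - expF h) ^ 2) = N * varF h := by
    rw [varF_def, mul_div_cancel₀ _ hN.ne']
  have e4 : (∑ x, (f x - expF f) * (g x - expF g)) = N * covF f g := by
    rw [covF_def, mul_div_cancel₀ _ hN.ne']
  have e5 : (∑ x, (f x - expF f) * (h x - expF h)) = N * covF f h := by
    rw [covF_def, mul_div_cancel₀ _ hN.ne']
  have e6 : (∑ x, (g x - expF g) * (h x - expF h)) = N * covF g h := by
    rw [covF_def, mul_div_cancel₀ _ hN.ne']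
  simp only [e1, e2, e3, e4, e5, e6] at key
  have hN4 : 0 < N ^ 4 := by positivity
  nlinarith [key, hN4]

/-- The key determinant inequality for correlations. -/
lemma rho_det {f g h : α → ℝ} (hf : 0 < varF f) (hg : 0 < varF g) (hh : 0 < varF h) :
    (rho g h - rho f g * rho f h) ^ 2 ≤ (1 - rho f g ^ 2) * (1 - rho f h ^ 2) := by
  set sf := Real.sqrt (varF f) with hsfdef
  set sg := Real.sqrt (varF g) with hsgdef
  set sh := Real.sqrt (varF h) with hshdef
  have hsf : sf ^ 2 = varF f := Real.sq_sqrt hf.le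
  have hsg : sg ^ 2 = varF g := Real.sq_sqrt hg.le
  have hsh : sh ^ 2 = varF h := Real.sq_sqrt hh.le
  have hsf0 : 0 < sf := Real.sqrt_pos.mpr hf
  have hsg0 : 0 < sg := Real.sqrt_pos.mpr hg
  have hsh0 : 0 < sh := Real.sqrt_pos.mpr hh
  have rfg : rho f g = covF f g / (sf * sg) := by
    rw [rho, Real.sqrt_mul (varF_nonneg f)]
  have rfh : rho f h = covF f h / (sf * sh) := by
    rw [rho, Real.sqrt_mul (varF_nonneg f)]
  have rgh : rho g h = covF g h / (sg * sh) := by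
    rw [rho, Real.sqrt_mul (varF_nonneg g)]
  have key := gram_cov g h hf
  rw [← hsf, ← hsg, ← hsh] at key
  have e1 : rho g h - rho f g * rho f h
      = (sf ^ 2 * covF g h - covF f g * covF f h) / (sf ^ 2 * (sg * sh)) := by
    rw [rfg, rfh, rgh]; field_simp
  have e2 : 1 - rho f g ^ 2 = (sf ^ 2 * sg ^ 2 - covF f g ^ 2) / (sf ^ 2 * sg ^ 2) := by
    rw [rfg]; field_simp
  have e3 : 1 - rho f h ^ 2 = (sf ^ 2 * sh ^ 2 - covF f h ^ 2) / (sf ^ 2 * sh ^ 2) := by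
    rw [rfh]; field_simp
  rw [e1, e2, e3, div_pow, div_mul_div_comm]
  have hden : (sf ^ 2 * (sg * sh)) ^ 2 = (sf ^ 2 * sg ^ 2) * (sf ^ 2 * sh ^ 2) := by ring
  rw [hden]
  exact div_le_div_of_nonneg_right key (by positivity) |>.trans_eq rfl

end Aux

/-- Proposition 3.6:
`max{0,ρ(f,g)}² + max{0,ρ(f,h)}² ≤ 1 + max{0,ρ(g,h)}`. -/
theorem stmt_13 {α : Type*} [Fintype α] [Nonempty α] (f g h : α → ℝ)
    (hf : ∃ x y, f x ≠ f y) (hg : ∃ x y, g x ≠ g y) (hh : ∃ x y, h x ≠ h y) :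
    max 0 (rho f g) ^ 2 + max 0 (rho f h) ^ 2 ≤ 1 + max 0 (rho g h) := by
  have vf := varF_pos hf
  have vg := varF_pos hg
  have vh := varF_pos hh
  set a := rho f g with ha
  set b := rho f h with hb
  set c := rho g h with hc
  have ha1 : a ^ 2 ≤ 1 := rho_sq_le_one vf vg
  have hb1 : b ^ 2 ≤ 1 := rho_sq_le_one vf vh
  have hc1 : c ^ 2 ≤ 1 := rho_sq_le_one vg vh
  have hd : (c - a * b) ^ 2 ≤ (1 - a ^ 2) * (1 - b ^ 2) := rho_det vf vg vh
  have hA1 : max 0 a ^ 2 ≤ 1 := by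
    rcases le_total a 0 with h' | h'
    · rw [max_eq_left h']; norm_num
    · rw [max_eq_right h']; exact ha1
  have hB1 : max 0 b ^ 2 ≤ 1 := by
    rcases le_total b 0 with h' | h'
    · rw [max_eq_left h']; norm_num
    · rw [max_eq_right h']; exact hb1
  have hC0 : 0 ≤ max 0 c := le_max_left _ _
  rcases le_or_gt a 0 with hA | hA
  · rw [max_eq_left hA]; nlinarith [hB1, hC0]
  rcases le_or_gt b 0 with hB | hB
  · rw [max_eq_left hB]; nlinarith [hA1, hC0]
  rw [max_eq_right hA.le, max_eq_right hB.le]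
  rcases le_or_gt c 0 with hC | hC
  · rw [max_eq_left hC]
    nlinarith [hd, mul_nonneg (mul_nonneg hA.le hB.le) (neg_nonneg.mpr hC), sq_nonneg c]
  · rw [max_eq_right hC.le]
    have hcle : c ≤ 1 := by nlinarith [hc1]
    nlinarith [hd, mul_nonneg hC.le (sq_nonneg (a - b)), sq_nonneg (a - b),
      mul_nonneg (sub_nonneg.mpr hcle) (sq_nonneg (a + b)), ha1, hb1]
end

section
/- Let n ≥ 1 and let g : {0,1}^n → ℝ be the anti-dictator function g(x) = −x₁. Then 𝔈⁻(g) > 0 and ‖ℒ⁻g‖₂² = 𝔈⁻(g). (Together with the lower bound ‖ℒ⁻f‖₂² ≥ 𝔈⁻(f) for all f, this shows the dynamical spectral gap of the directed hypercube equals 1.) -/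
open Finset

/-
A function `x ↦ φ (x i)` of a single coordinate only moves along direction `i`, so both sides
collapse to that direction. There `ℒ⁻` is nonzero exactly when `φ` decreases, and then its square
is the constant `(φ true - φ false)² / 4` on every vertex, which is also the constant integrand of
`𝔈⁻`. For the anti-dictator the common value is `1/4`.
-/

section Bits

variable {n : ℕ} (x : Fin n → Bool) {i j : Fin n}

lemma bset_apply_self (b : Bool) : bset x i b i = b := Function.update_self _ _ _

lemma bset_apply_of_ne (b : Bool) (h : j ≠ i) : bset x j b i = x i :=
  Function.update_of_ne h.symm _ _

lemma bflip_eq_bset : bflip x i = bset x i (!x i) := rfl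

end Bits

lemma expC_const {n : ℕ} (c : ℝ) : expC (fun _ : Fin n → Bool => c) = c := by
  simp [expC, Finset.card_univ]

section Coordinate

variable {n : ℕ} (φ : Bool → ℝ) (i : Fin n)

lemma lapI_comp_eval_of_ne {j : Fin n} (h : j ≠ i) (x : Fin n → Bool) :
    lapI (fun y => φ (y i)) j x = 0 := by
  simp [lapI, bflip_eq_bset, bset_apply_of_ne _ _ h]

lemma lapMinus_comp_eval (x : Fin n → Bool) :
    lapMinus (fun y => φ (y i)) x =
      (1 / 2) * (φ (!x i) - φ (x i)) * (if φ true < φ false then (1 : ℝ) else 0) := by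
  rw [lapMinus, Finset.sum_eq_single_of_mem i (Finset.mem_univ _)
    (fun j _ hj => lapI_comp_eval_of_ne φ i hj x)]
  simp only [lapI, bflip_eq_bset, bset_apply_self]

lemma sq_lapMinus_comp_eval (x : Fin n → Bool) :
    lapMinus (fun y => φ (y i)) x ^ 2 = (1 / 4) * min 0 (φ true - φ false) ^ 2 := by
  rw [lapMinus_comp_eval]
  split_ifs with h
  · rw [min_eq_right (by linarith)]
    cases x i <;> simp only [Bool.not_false, Bool.not_true] <;> ring
  · rw [min_eq_left (by linarith)]
    ring

lemma energyMinus_comp_eval :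
    energyMinus (fun y => φ (y i)) = (1 / 4) * min 0 (φ true - φ false) ^ 2 := by
  have hsum (x : Fin n → Bool) :
      ∑ j, min 0 (φ (bset x j true i) - φ (bset x j false i)) ^ 2 =
        min 0 (φ true - φ false) ^ 2 := by
    rw [Finset.sum_eq_single_of_mem i (Finset.mem_univ _)]
    · simp only [bset_apply_self]
    · intro j _ hj
      simp [bset_apply_of_ne _ _ hj]
  simp only [energyMinus, hsum, expC_const]

lemma expC_sq_lapMinus_comp_eval :
    expC (fun x => lapMinus (fun y => φ (y i)) x ^ 2) = energyMinus (fun y => φ (y i)) := by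
  simp only [sq_lapMinus_comp_eval, expC_const, energyMinus_comp_eval]

end Coordinate

/-- tightness via the anti-dictator `g(x) = −x₁`:
`𝔈⁻(g) > 0` and `‖ℒ⁻g‖₂² = 𝔈⁻(g)`. -/
theorem stmt_16 (n : ℕ) (hn : 1 ≤ n) :
    0 < energyMinus (fun x : Fin n → Bool => -(if x ⟨0, hn⟩ then (1 : ℝ) else 0)) ∧
    expC (fun x => lapMinus (fun y : Fin n → Bool => -(if y ⟨0, hn⟩ then (1 : ℝ) else 0)) x ^ 2)
      = energyMinus (fun x : Fin n → Bool => -(if x ⟨0, hn⟩ then (1 : ℝ) else 0)) := by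
  set φ : Bool → ℝ := fun b => -(if b then 1 else 0)
  refine ⟨?_, expC_sq_lapMinus_comp_eval φ ⟨0, hn⟩⟩
  rw [energyMinus_comp_eval φ ⟨0, hn⟩]
  norm_num [φ]
end

section
/- For every n ≥ 1, every function f : {0,1}^n → ℝ, and all indices i, j ∈ {1,…,n} with i ≠ j, the coordinate components of the directed Laplacian are nonnegatively correlated: ⟨ℒ^{(i)}f, ℒ^{(j)}f⟩ ≥ 0. -/
open Finset

private lemma key_ineq (a b c d : ℝ) :
    0 ≤ (1/2*(b-a)*(if b<a then (1:ℝ) else 0))*(1/2*(c-a)*(if c<a then (1:ℝ) else 0))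
      + (1/2*(a-b)*(if b<a then (1:ℝ) else 0))*(1/2*(d-b)*(if d<b then (1:ℝ) else 0))
      + (1/2*(d-c)*(if d<c then (1:ℝ) else 0))*(1/2*(a-c)*(if c<a then (1:ℝ) else 0))
      + (1/2*(c-d)*(if d<c then (1:ℝ) else 0))*(1/2*(b-d)*(if d<b then (1:ℝ) else 0)) := by
  split_ifs <;> nlinarith [sq_nonneg (b - a - d + c)]

private lemma orbit_nonneg {n : ℕ} (f : (Fin n → Bool) → ℝ) (i j : Fin n) (hij : i ≠ j)
    (x : Fin n → Bool) (u v : Bool) :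
    0 ≤ lapI f i (bset (bset x i u) j v) * lapI f j (bset (bset x i u) j v)
      + lapI f i (bflip (bset (bset x i u) j v) i) * lapI f j (bflip (bset (bset x i u) j v) i)
      + lapI f i (bflip (bset (bset x i u) j v) j) * lapI f j (bflip (bset (bset x i u) j v) j)
      + lapI f i (bflip (bflip (bset (bset x i u) j v) i) j) *
          lapI f j (bflip (bflip (bset (bset x i u) j v) i) j) := by
  have key := key_ineq (f (Function.update (Function.update x j false) i false))
    (f (Function.update (Function.update x j false) i true))
    (f (Function.update (Function.update x j true) i false))
    (f (Function.update (Function.update x j true) i true))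
  cases u <;> cases v <;>
    · simp only [lapI, bflip, bset, Function.update_comm hij, Function.update_idem,
        Function.update_of_ne hij.symm, Function.update_self, Bool.not_true, Bool.not_false]
      exact key.trans_eq (by ring)

/-- the coordinate components of the directed Laplacian are
nonnegatively correlated: `⟨ℒ^{(i)}f, ℒ^{(j)}f⟩ ≥ 0` for `i ≠ j`. -/
theorem stmt_17 (n : ℕ) (hn : 1 ≤ n) (f : (Fin n → Bool) → ℝ) (i j : Fin n) (hij : i ≠ j) :
    0 ≤ expC (fun x => lapI f i x * lapI f j x) := by
  set g : (Fin n → Bool) → ℝ := fun z => lapI f i z * lapI f j z with hg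
  have h4 : ∀ x : Fin n → Bool,
      0 ≤ g x + g (bflip x i) + g (bflip x j) + g (bflip (bflip x i) j) := by
    intro x
    have h := orbit_nonneg f i j hij x (x i) (x j)
    have hx : bset (bset x i (x i)) j (x j) = x := by
      simp [bset, Function.update_eq_self]
    rwa [hx] at h
  have hflip : ∀ k : Fin n, Function.Involutive (fun z : Fin n → Bool => bflip z k) := by
    intro k z
    simp [bflip]
  have hsum : ∀ (h : (Fin n → Bool) → ℝ) (k : Fin n), ∑ x, h (bflip x k) = ∑ x, h x := by
    intro h k
    exact Equiv.sum_comp ((hflip k).toPerm) h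
  have key : (0:ℝ) ≤ ∑ x, (g x + g (bflip x i) + g (bflip x j) + g (bflip (bflip x i) j)) :=
    Finset.sum_nonneg fun x _ => h4 x
  rw [Finset.sum_add_distrib, Finset.sum_add_distrib, Finset.sum_add_distrib] at key
  rw [hsum g i, hsum g j] at key
  have hsum2 : ∑ x, g (bflip (bflip x i) j) = ∑ x, g x := by
    have h1 : ∑ x, g (bflip (bflip x i) j) = ∑ x, g (bflip x j) :=
      Equiv.sum_comp ((hflip i).toPerm) (fun z => g (bflip z j))
    rw [h1, hsum g j]
  rw [hsum2] at key
  unfold expC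
  apply div_nonneg _ (by positivity)
  linarith
end

section
/- For every n ≥ 1 and every function f : {0,1}^n → ℝ, n·dist₂^mono(f)² ≥ 𝔈⁻(f). -/
open Finset

/-! For monotone `g`, the edge `bset x i false ≼ bset x i true` can only carry a downward jump
of `f` that is paid for by `|f - g|` at its two endpoints: `(min 0 (f₁ - f₀))² ≤
2((f₁ - g₁)² + (f₀ - g₀)²)`. Each point of the cube is an endpoint of exactly one edge in
direction `i`, so summing over the edges of one direction costs `4 ‖f - g‖²`, and summing over
the `n` directions gives `4 𝔈⁻(f) ≤ 4 n ‖f - g‖²`; now take the infimum over `g`. -/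

lemma sq_min_zero_sub_le {a₀ a₁ b₀ b₁ : ℝ} (hb : b₀ ≤ b₁) :
    (min 0 (a₁ - a₀)) ^ 2 ≤ 2 * ((a₁ - b₁) ^ 2 + (a₀ - b₀) ^ 2) := by
  rcases le_or_gt a₀ a₁ with ha | ha
  · rw [min_eq_left (by linarith)]
    nlinarith [sq_nonneg (a₁ - b₁), sq_nonneg (a₀ - b₀)]
  · rw [min_eq_right (by linarith)]
    nlinarith [sq_nonneg ((a₁ - b₁) + (a₀ - b₀))]

lemma bset_false_le_bset_true {n : ℕ} (x : Fin n → Bool) (i : Fin n) :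
    bset x i false ≤ bset x i true := by
  intro j
  by_cases hj : j = i <;> simp [bset, hj]

lemma sum_comp_bflip {M : Type*} [AddCommMonoid M] {n : ℕ} (i : Fin n)
    (h : (Fin n → Bool) → M) : ∑ x, h (bflip x i) = ∑ x, h x :=
  Fintype.sum_equiv (Function.Involutive.toPerm _ (bflip_bflip · i)) _ _ fun _ => rfl

lemma bset_true_add_bset_false {M : Type*} [AddCommMagma M] {n : ℕ} (x : Fin n → Bool)
    (i : Fin n) (h : (Fin n → Bool) → M) :
    h (bset x i true) + h (bset x i false) = h x + h (bflip x i) := by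
  cases hx : x i
  · rw [show bset x i false = x from Function.update_eq_self_iff.2 hx.symm,
      show bset x i true = bflip x i by simp [bset, bflip, hx], add_comm]
  · rw [show bset x i true = x from Function.update_eq_self_iff.2 hx.symm,
      show bset x i false = bflip x i by simp [bset, bflip, hx]]

lemma sum_bset_true_add_bset_false {M : Type*} [AddCommMonoid M] {n : ℕ} (i : Fin n)
    (h : (Fin n → Bool) → M) :
    ∑ x, (h (bset x i true) + h (bset x i false)) = ∑ x, h x + ∑ x, h x := by
  simp only [bset_true_add_bset_false, Finset.sum_add_distrib, sum_comp_bflip]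

lemma sum_sq_min_zero_le {n : ℕ} (f g : (Fin n → Bool) → ℝ) (hg : Monotone g) (i : Fin n) :
    ∑ x, (min 0 (f (bset x i true) - f (bset x i false))) ^ 2 ≤ 4 * ∑ x, (f x - g x) ^ 2 :=
  calc ∑ x, (min 0 (f (bset x i true) - f (bset x i false))) ^ 2
      ≤ ∑ x, 2 * ((f (bset x i true) - g (bset x i true)) ^ 2
          + (f (bset x i false) - g (bset x i false)) ^ 2) :=
        Finset.sum_le_sum fun x _ => sq_min_zero_sub_le (hg (bset_false_le_bset_true x i))
    _ = 4 * ∑ x, (f x - g x) ^ 2 := by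
        rw [← Finset.mul_sum, sum_bset_true_add_bset_false i fun x => (f x - g x) ^ 2]
        ring

lemma energyMinus_le_mul_expC_sq_sub {n : ℕ} (f g : (Fin n → Bool) → ℝ) (hg : Monotone g) :
    energyMinus f ≤ n * expC fun x => (f x - g x) ^ 2 := by
  have hsum : ∑ x, ∑ i, (min 0 (f (bset x i true) - f (bset x i false))) ^ 2
      ≤ n * (4 * ∑ x, (f x - g x) ^ 2) := by
    rw [Finset.sum_comm]
    simpa using Finset.sum_le_sum fun i (_ : i ∈ Finset.univ) => sum_sq_min_zero_le f g hg i
  unfold energyMinus expC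
  calc 1 / 4 * ((∑ x, ∑ i, (min 0 (f (bset x i true) - f (bset x i false))) ^ 2) / 2 ^ n)
      ≤ 1 / 4 * (n * (4 * ∑ x, (f x - g x) ^ 2) / 2 ^ n) := by gcongr
    _ = n * ((∑ x, (f x - g x) ^ 2) / 2 ^ n) := by ring

theorem stmt_19_general (n : ℕ) (f : (Fin n → Bool) → ℝ) :
    (n : ℝ) * dist2mono f ^ 2 ≥ energyMinus f := by
  have : Nonempty {g : (Fin n → Bool) → ℝ // Monotone g} := ⟨⟨0, monotone_const⟩⟩
  have hdist_nonneg : ∀ g : {g : (Fin n → Bool) → ℝ // Monotone g},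
      0 ≤ expC fun x => (f x - g.1 x) ^ 2 := fun g => by unfold expC; positivity
  have hdist : dist2mono f = Real.sqrt (⨅ g : {g : (Fin n → Bool) → ℝ // Monotone g},
      expC fun x => (f x - g.1 x) ^ 2) :=
    (Real.sqrt_monotone.map_ciInf_of_continuousAt Real.continuous_sqrt.continuousAt
      ⟨0, Set.forall_mem_range.2 hdist_nonneg⟩).symm
  rw [hdist, Real.sq_sqrt (le_ciInf hdist_nonneg), Real.mul_iInf_of_nonneg n.cast_nonneg]
  exact le_ciInf fun g => energyMinus_le_mul_expC_sq_sub f g.1 g.2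

/-- reverse directed Poincaré inequality on the hypercube:
`n·dist₂^mono(f)² ≥ 𝔈⁻(f)`. -/
theorem stmt_19 (n : ℕ) (hn : 1 ≤ n) (f : (Fin n → Bool) → ℝ) :
    (n : ℝ) * dist2mono f ^ 2 ≥ energyMinus f :=
  stmt_19_general n f
end
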